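/- arXiv:2110.01165 — 7 statements merged into one kernel-verified Lean document; each statement's English description precedes it below -/
import Mathlib

section
/- (Inner loop induction, Lemma 2) Let L > 0, let f : ℝ^d → ℝ be differentiable with L-Lipschitz gradient, let η > 0, S ≥ 1 an integer, and let u^0, …, u^S and v^0, …, v^{S−1} be vectors in ℝ^d satisfying u^{s+1} = u^s − η·v^s for all 0 ≤ s ≤ S−1. Then Σ_{s=0}^{S−1} ‖∇f(u^s)‖₂² ≤ (2/η)·(f(u^0) − f(u^S)) + Σ_{s=0}^{S−1} ‖∇f(u^s) − v^s‖₂² − (1 − η·L)·Σ_{s=0}^{S−1} ‖v^s‖₂². -/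
noncomputable section

/-- `ℝ^d` as a Euclidean space. -/
abbrev Vec (d : ℕ) := EuclideanSpace ℝ (Fin d)

lemma descent_lemma {d : ℕ} (L : ℝ) (hL : 0 ≤ L) (f : Vec d → ℝ)
    (hdiff : Differentiable ℝ f)
    (hlip : ∀ x y : Vec d, ‖gradient f x - gradient f y‖ ≤ L * ‖x - y‖)
    (x y : Vec d) :
    f y ≤ f x + inner ℝ (gradient f x) (y - x) + L / 2 * ‖y - x‖ ^ 2 := by
  set w : Vec d := y - x with hw
  set φ : ℝ → ℝ := fun t => f (x + t • w) - t * inner ℝ (gradient f x) w - L / 2 * t ^ 2 * ‖w‖ ^ 2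
    with hφ
  have hc : ∀ t : ℝ, HasDerivAt (fun t : ℝ => x + t • w) w t := fun t => by
    simpa using ((hasDerivAt_id t).smul_const w).const_add x
  have hfd : ∀ t : ℝ, HasDerivAt (fun t : ℝ => f (x + t • w))
      (inner ℝ (gradient f (x + t • w)) w) t := by
    intro t
    have hg := (hdiff (x + t • w)).hasGradientAt
    have hF := hasGradientAt_iff_hasFDerivAt.mp hg
    have := hF.comp_hasDerivAt t (hc t)
    simpa [Function.comp_def] using this
  have hφd : ∀ t : ℝ, HasDerivAt φ
      (inner ℝ (gradient f (x + t • w)) w - inner ℝ (gradient f x) w - L * t * ‖w‖ ^ 2) t := by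
    intro t
    have h1 : HasDerivAt (fun t : ℝ => t * inner ℝ (gradient f x) w)
        (inner ℝ (gradient f x) w) t := by
      simpa using (hasDerivAt_id t).mul_const (inner ℝ (gradient f x) w : ℝ)
    have h2 : HasDerivAt (fun t : ℝ => L / 2 * t ^ 2 * ‖w‖ ^ 2) (L * t * ‖w‖ ^ 2) t := by
      have : HasDerivAt (fun t : ℝ => t ^ 2) (2 * t) t := by
        simpa using hasDerivAt_pow 2 t
      have h := (this.const_mul (L / 2)).mul_const (‖w‖ ^ 2)
      refine h.congr_deriv ?_
      ring
    exact ((hfd t).sub h1).sub h2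
  have hderiv : ∀ t ∈ Set.Ioo (0:ℝ) 1, deriv φ t ≤ 0 := by
    intro t ht
    rw [(hφd t).deriv]
    have hb : (inner ℝ (gradient f (x + t • w)) w : ℝ) - inner ℝ (gradient f x) w
        = inner ℝ (gradient f (x + t • w) - gradient f x) w := by
      rw [inner_sub_left]
    rw [hb]
    have h1 : (inner ℝ (gradient f (x + t • w) - gradient f x) w : ℝ)
        ≤ ‖gradient f (x + t • w) - gradient f x‖ * ‖w‖ := real_inner_le_norm _ _
    have h2 : ‖gradient f (x + t • w) - gradient f x‖ ≤ L * (t * ‖w‖) := by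
      have := hlip (x + t • w) x
      simpa [norm_smul, abs_of_pos ht.1] using this
    nlinarith [norm_nonneg w, mul_le_mul_of_nonneg_right h2 (norm_nonneg w)]
  have hcont : ContinuousOn φ (Set.Icc (0:ℝ) 1) :=
    (HasDerivAt.continuousOn fun t _ => hφd t)
  have key : φ 1 - φ 0 ≤ 0 * (1 - 0) := by
    exact (convex_Icc (0:ℝ) 1).image_sub_le_mul_sub_of_deriv_le hcont
      (fun t ht => ((hφd t).differentiableAt).differentiableWithinAt)
      (by simpa [interior_Icc] using hderiv)
      0 (by norm_num) 1 (by norm_num) (by norm_num)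
  have h10 : x + (1:ℝ) • w = y := by simp [hw]
  have h00 : x + (0:ℝ) • w = x := by simp
  simp only [hφ, h10, h00] at key
  nlinarith [key]

/-- Inner loop induction, Lemma 2. If `f` is differentiable with
`L`-Lipschitz gradient and `u^{s+1} = u^s − η·v^s` for `0 ≤ s ≤ S−1`, then
`Σ_{s<S} ‖∇f(u^s)‖² ≤ (2/η)(f(u⁰) − f(u^S)) + Σ_{s<S} ‖∇f(u^s) − v^s‖²
  − (1 − ηL)·Σ_{s<S} ‖v^s‖²`. -/
theorem inner_loop_induction {d : ℕ} (L : ℝ) (hL : 0 < L) (f : Vec d → ℝ)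
    (hdiff : Differentiable ℝ f)
    (hlip : ∀ x y : Vec d, ‖gradient f x - gradient f y‖ ≤ L * ‖x - y‖)
    (η : ℝ) (hη : 0 < η) (S : ℕ) (hS : 1 ≤ S) (u v : ℕ → Vec d)
    (hupd : ∀ s < S, u (s + 1) = u s - η • v s) :
    ∑ s ∈ Finset.range S, ‖gradient f (u s)‖ ^ 2 ≤
      (2 / η) * (f (u 0) - f (u S))
      + ∑ s ∈ Finset.range S, ‖gradient f (u s) - v s‖ ^ 2
      - (1 - η * L) * ∑ s ∈ Finset.range S, ‖v s‖ ^ 2 := by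

  have step : ∀ s < S, ‖gradient f (u s)‖ ^ 2 ≤
      (2 / η) * (f (u s) - f (u (s + 1)))
      + ‖gradient f (u s) - v s‖ ^ 2 - (1 - η * L) * ‖v s‖ ^ 2 := by
    intro s hs
    have hdesc := descent_lemma L hL.le f hdiff hlip (u s) (u (s + 1))
    rw [hupd s hs] at hdesc
    rw [hupd s hs]
    have hwd : u s - η • v s - u s = (-η) • v s := by rw [neg_smul]; abel
    rw [hwd] at hdesc
    have hin : (inner ℝ (gradient f (u s)) ((-η) • v s) : ℝ)
        = -η * inner ℝ (gradient f (u s)) (v s) := real_inner_smul_right _ _ _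
    have hnm : ‖(-η) • v s‖ ^ 2 = η ^ 2 * ‖v s‖ ^ 2 := by
      rw [norm_smul]; simp [abs_of_pos hη]; ring
    rw [hin, hnm] at hdesc
    have hpol : ‖gradient f (u s) - v s‖ ^ 2
        = ‖gradient f (u s)‖ ^ 2 - 2 * inner ℝ (gradient f (u s)) (v s) + ‖v s‖ ^ 2 :=
      norm_sub_sq_real _ _
    have h2η : (2 / η) * (f (u s) - f (u s - η • v s)) ≥
        2 * inner ℝ (gradient f (u s)) (v s) - η * L * ‖v s‖ ^ 2 := by
      rw [ge_iff_le, show (2 / η) * (f (u s) - f (u s - η • v s))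
        = (2 * (f (u s) - f (u s - η • v s))) / η from by ring, le_div_iff₀ hη]
      nlinarith [hdesc]
    linarith [h2η, hpol.ge, hpol.le]
  calc ∑ s ∈ Finset.range S, ‖gradient f (u s)‖ ^ 2
      ≤ ∑ s ∈ Finset.range S, ((2 / η) * (f (u s) - f (u (s + 1)))
        + ‖gradient f (u s) - v s‖ ^ 2 - (1 - η * L) * ‖v s‖ ^ 2) :=
        Finset.sum_le_sum fun s hs => step s (Finset.mem_range.mp hs)
    _ = (2 / η) * (f (u 0) - f (u S))
        + ∑ s ∈ Finset.range S, ‖gradient f (u s) - v s‖ ^ 2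
        - (1 - η * L) * ∑ s ∈ Finset.range S, ‖v s‖ ^ 2 := by
        simp only [Finset.sum_sub_distrib, Finset.sum_add_distrib, ← Finset.mul_sum,
          Finset.sum_range_sub' (fun s => f (u s))]
end
end

section
/- (Claim 1) Let α ∈ (0,1) and η, L > 0 satisfy η·L ≤ (1−α)³/(10α). Define the 2×2 matrix G with rows [α, 2α²η²L²/(1−α)] and [16α²/(1−α), α + 4α⁴η²L²/(1−α)]. Then every eigenvalue of G lies in the open interval (−1, 1), I₂ − G is invertible, the Neumann series Σ_{s=0}^∞ Gˢ converges to (I₂ − G)^{−1}, and entrywise (I₂ − G)^{−1} ≤ the matrix with rows [2/(1−α), 4α²η²L²/(1−α)³] and [32α²/(1−α)³, 2/(1−α)]. -/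
open Finset Filter

set_option maxHeartbeats 4000000
set_option maxRecDepth 4000


noncomputable section

/-- Claim 1. For `α ∈ (0,1)`, `η, L > 0` with `ηL ≤ (1−α)³/(10α)`,
the matrix `G = [[α, 2α²η²L²/(1−α)], [16α²/(1−α), α + 4α⁴η²L²/(1−α)]]` has all
eigenvalues in `(−1,1)`, `I₂ − G` is invertible, the Neumann series `Σ Gˢ`
converges to `(I₂ − G)⁻¹`, and entrywise
`(I₂ − G)⁻¹ ≤ [[2/(1−α), 4α²η²L²/(1−α)³], [32α²/(1−α)³, 2/(1−α)]]`. -/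
theorem neumann_series_inner (α η L : ℝ) (hα : α ∈ Set.Ioo (0 : ℝ) 1)
    (hη : 0 < η) (hL : 0 < L) (hstep : η * L ≤ (1 - α) ^ 3 / (10 * α))
    (G : Matrix (Fin 2) (Fin 2) ℝ)
    (hG : G = !![α, 2 * α ^ 2 * η ^ 2 * L ^ 2 / (1 - α);
                 16 * α ^ 2 / (1 - α), α + 4 * α ^ 4 * η ^ 2 * L ^ 2 / (1 - α)]) :
    (∀ μ ∈ spectrum ℝ G, μ ∈ Set.Ioo (-1 : ℝ) 1) ∧
    IsUnit (1 - G) ∧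
    HasSum (fun s : ℕ => G ^ s) (1 - G)⁻¹ ∧
    (∀ i j, (1 - G)⁻¹ i j ≤
      !![2 / (1 - α), 4 * α ^ 2 * η ^ 2 * L ^ 2 / (1 - α) ^ 3;
         32 * α ^ 2 / (1 - α) ^ 3, 2 / (1 - α)] i j) := by
  obtain ⟨ha0, ha1⟩ := hα
  obtain ⟨t, htdef⟩ : ∃ t : ℝ, t = 1 - α := ⟨_, rfl⟩
  rw [← htdef] at hG hstep ⊢
  have ht : 0 < t := by rw [htdef]; linarith
  have htle1 : t < 1 := by rw [htdef]; linarith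
  have hsum : α + t = 1 := by rw [htdef]; ring
  have ht2' : t ^ 2 ≤ 1 := by nlinarith [mul_nonneg (by linarith : (0:ℝ) ≤ 1 - t) (by linarith : (0:ℝ) ≤ 1 + t)]
  have ht3 : t ^ 3 ≤ t := by nlinarith [mul_nonneg (mul_nonneg ht.le (by linarith : (0:ℝ) ≤ 1 - t)) (by linarith : (0:ℝ) ≤ 1 + t)]
  have ht2 : t ^ 4 ≤ t ^ 2 := by nlinarith [mul_nonneg (mul_nonneg (sq_nonneg t) (by linarith : (0:ℝ) ≤ 1 - t)) (by linarith : (0:ℝ) ≤ 1 + t)]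
  obtain ⟨b, hbdef⟩ : ∃ b : ℝ, b = 2 * α ^ 2 * η ^ 2 * L ^ 2 / t := ⟨_, rfl⟩
  obtain ⟨c, hcdef⟩ : ∃ c : ℝ, c = 16 * α ^ 2 / t := ⟨_, rfl⟩
  obtain ⟨d, hddef⟩ : ∃ d : ℝ, d = α + 4 * α ^ 4 * η ^ 2 * L ^ 2 / t := ⟨_, rfl⟩
  rw [← hbdef, ← hcdef, ← hddef] at hG
  have h10 : η * L * (10 * α) ≤ t ^ 3 := (le_div_iff₀ (by positivity)).mp hstep
  have hkey : 100 * (α ^ 2 * (η ^ 2 * L ^ 2)) ≤ t ^ 6 := by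
    nlinarith only [mul_self_le_mul_self (by positivity : (0:ℝ) ≤ η * L * (10 * α)) h10]
  have hat : α * t ≤ 1 / 4 := by nlinarith [sq_nonneg (α - t)]
  have h16 : α ^ 2 * t ^ 2 ≤ 1 / 16 := by
    nlinarith only [mul_self_le_mul_self (le_of_lt (mul_pos ha0 ht)) hat]
  have hmaster : 1600 * (α ^ 4 * (η ^ 2 * L ^ 2)) ≤ t ^ 4 := by
    have hA := mul_le_mul_of_nonneg_left hkey (by positivity : (0:ℝ) ≤ 16 * α ^ 2)
    have hB := mul_le_mul_of_nonneg_right h16 (by positivity : (0:ℝ) ≤ t ^ 4)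
    nlinarith only [hA, hB]
  have hb0 : 0 ≤ b := by rw [hbdef]; positivity
  have hc0 : 0 ≤ c := by rw [hcdef]; positivity
  have hbc : b * c ≤ t ^ 2 / 50 := by
    have hbc' : b * c = 32 * (α ^ 4 * (η ^ 2 * L ^ 2)) / t ^ 2 := by
      rw [hbdef, hcdef]; field_simp; ring
    rw [hbc', div_le_div_iff₀ (by positivity) (by norm_num)]
    nlinarith only [hmaster]
  have hαd : α ≤ d := by
    rw [hddef]
    have : 0 ≤ 4 * α ^ 4 * η ^ 2 * L ^ 2 / t := by positivity
    linarith
  have hdle : d ≤ α + t ^ 3 / 400 := by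
    rw [hddef]
    have : 4 * α ^ 4 * η ^ 2 * L ^ 2 / t ≤ t ^ 3 / 400 := by
      rw [div_le_div_iff₀ ht (by norm_num)]
      nlinarith only [hmaster]
    linarith
  have hd1 : d < 1 := by nlinarith only [hdle, ht3, ht, hsum, ha0]
  have hone : (1 : Matrix (Fin 2) (Fin 2) ℝ) - G = !![t, -b; -c, 1 - d] := by
    rw [hG, Matrix.one_fin_two]
    ext i j
    fin_cases i <;> fin_cases j <;> simp [htdef]
  have hdet1G : ((1 : Matrix (Fin 2) (Fin 2) ℝ) - G).det = t * (1 - d) - b * c := by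
    rw [hone, Matrix.det_fin_two_of]; ring
  have h1 : t * (1 - d) = t ^ 2 - 4 * α ^ 4 * (η ^ 2 * L ^ 2) := by
    rw [hddef]
    field_simp
    linear_combination (-t) * hsum
  have hΔ : t ^ 2 / 2 ≤ t * (1 - d) - b * c := by nlinarith only [h1, hbc, hmaster, ht2]
  have hΔpos : (0:ℝ) < ((1 : Matrix (Fin 2) (Fin 2) ℝ) - G).det := by
    rw [hdet1G]; nlinarith only [hΔ, mul_pos ht ht]
  have hUnitDet : IsUnit ((1 : Matrix (Fin 2) (Fin 2) ℝ) - G).det :=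
    isUnit_iff_ne_zero.2 (ne_of_gt hΔpos)
  have hUnit : IsUnit ((1 : Matrix (Fin 2) (Fin 2) ℝ) - G) :=
    (Matrix.isUnit_iff_isUnit_det _).2 hUnitDet
  -- eigenvalues
  have hspec : ∀ μ ∈ spectrum ℝ G, μ ∈ Set.Ioo (-1 : ℝ) 1 := by
    intro μ hμ
    by_contra hcon
    simp only [Set.mem_Ioo, not_and_or, not_lt] at hcon
    apply spectrum.mem_iff.mp hμ
    have hmat : algebraMap ℝ (Matrix (Fin 2) (Fin 2) ℝ) μ - G = !![μ - α, -b; -c, μ - d] := by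
      rw [Algebra.algebraMap_eq_smul_one, hG, Matrix.one_fin_two]
      ext i j
      fin_cases i <;> fin_cases j <;> simp
    rw [hmat, Matrix.isUnit_iff_isUnit_det, Matrix.det_fin_two_of, isUnit_iff_ne_zero]
    have hne : b * c < (μ - α) * (μ - d) := by
      rcases hcon with h | h
      · nlinarith only [mul_nonneg (by linarith : (0:ℝ) ≤ -1 - (μ - α))
          (by linarith : (0:ℝ) ≤ -1 - (μ - d)), hbc, ht2', ht, h, hαd, ha0]
      · have h1' : t ≤ μ - α := by linarith
        have h2' : t - t ^ 3 / 400 ≤ μ - d := by linarith [hdle]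
        have h3' : (0:ℝ) ≤ t - t ^ 3 / 400 := by nlinarith only [ht3, ht.le]
        nlinarith only [mul_le_mul h1' h2' h3' (le_trans ht.le h1'), hbc, ht2, mul_pos ht ht]
    intro h0
    nlinarith only [hne, h0]
  -- partial sums identity
  have hinv : ((1 : Matrix (Fin 2) (Fin 2) ℝ) - G) * (1 - G)⁻¹ = 1 :=
    Matrix.mul_nonsing_inv _ hUnitDet
  have hps : ∀ n : ℕ, (∑ s ∈ range n, G ^ s) = (1 - G ^ n) * (1 - G)⁻¹ := by
    intro n
    have h2 : (∑ s ∈ range n, G ^ s) * (1 - G) = 1 - G ^ n := by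
      have h := geom_sum_mul G n
      calc (∑ s ∈ range n, G ^ s) * (1 - G)
          = -((∑ s ∈ range n, G ^ s) * (G - 1)) := by rw [← mul_neg, neg_sub]
        _ = 1 - G ^ n := by rw [h, neg_sub]
    calc (∑ s ∈ range n, G ^ s)
        = (∑ s ∈ range n, G ^ s) * (((1:Matrix (Fin 2) (Fin 2) ℝ) - G) * (1 - G)⁻¹) := by
          rw [hinv, mul_one]
      _ = ((∑ s ∈ range n, G ^ s) * (1 - G)) * (1 - G)⁻¹ := by rw [mul_assoc]
      _ = (1 - G ^ n) * (1 - G)⁻¹ := by rw [h2]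
  -- nonnegativity of powers
  have hG0 : ∀ i j, 0 ≤ G i j := by
    intro i j
    fin_cases i <;> fin_cases j <;> simp [hG] <;> linarith [hb0, hc0, hαd, ha0]
  have hpow0 : ∀ n : ℕ, ∀ i j, 0 ≤ (G ^ n) i j := by
    intro n
    induction n with
    | zero => intro i j; simp [Matrix.one_apply]; split <;> norm_num
    | succ n ih =>
      intro i j
      rw [pow_succ, Matrix.mul_apply]
      exact Finset.sum_nonneg fun k _ => mul_nonneg (ih i k) (hG0 k j)
  -- Perron-type vector
  obtain ⟨K, hKdef⟩ : ∃ K : ℝ, K = 64 * α ^ 2 / t ^ 2 := ⟨_, rfl⟩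
  have hK : 0 < K := by rw [hKdef]; positivity
  obtain ⟨u, hudef⟩ : ∃ u : Fin 2 → ℝ, u = ![1, K] := ⟨_, rfl⟩
  have hu : ∀ i, 0 < u i := by
    intro i; fin_cases i <;> simp [hudef, hK]
  obtain ⟨r, hrdef⟩ : ∃ r : ℝ, r = (1 + α) / 2 := ⟨_, rfl⟩
  have hr0 : 0 ≤ r := by rw [hrdef]; linarith
  have hr1 : r < 1 := by rw [hrdef]; linarith
  have hGu : ∀ i, (G.mulVec u) i ≤ r * u i := by
    have hbK : b * K ≤ t / 2 := by
      have hbK' : b * K = 128 * (α ^ 4 * (η ^ 2 * L ^ 2)) / t ^ 3 := by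
        rw [hbdef, hKdef]; field_simp; ring
      rw [hbK', div_le_div_iff₀ (by positivity) (by norm_num : (0:ℝ) < 2)]
      nlinarith only [hmaster, (by positivity : (0:ℝ) ≤ α ^ 4 * (η ^ 2 * L ^ 2))]
    have hpoly : 16 * α ^ 2 * t + 64 * α ^ 2 * d ≤ (1 + α) / 2 * (64 * α ^ 2) := by
      have h1 := mul_le_mul_of_nonneg_left hdle (by positivity : (0:ℝ) ≤ 64 * α ^ 2)
      have hsum2 : α ^ 3 + α ^ 2 * t = α ^ 2 := by linear_combination α ^ 2 * hsum
      nlinarith only [h1, hsum2, sq_nonneg α, mul_nonneg (sq_nonneg α) ht.le, ha0.le,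
        mul_le_mul_of_nonneg_left ht3 (by positivity : (0:ℝ) ≤ 64 * α ^ 2)]
    intro i
    fin_cases i <;>
      simp [Matrix.mulVec, dotProduct, Fin.sum_univ_two, hG, hudef]
    · rw [hrdef]; linarith only [hbK, hsum, ha0, ht]
    · calc c + d * K = (16 * α ^ 2 * t + 64 * α ^ 2 * d) / t ^ 2 := by
            rw [hcdef, hKdef]; field_simp
        _ ≤ ((1 + α) / 2 * (64 * α ^ 2)) / t ^ 2 := by gcongr
        _ = r * K := by rw [hrdef, hKdef]; field_simp; try ring
  have hpowu : ∀ n : ℕ, ∀ i, ((G ^ n).mulVec u) i ≤ r ^ n * u i := by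
    intro n
    induction n with
    | zero => intro i; simp [Matrix.one_mulVec]
    | succ n ih =>
      intro i
      rw [pow_succ, ← Matrix.mulVec_mulVec]
      have e : ((G ^ n).mulVec (G.mulVec u)) i
          = (G ^ n) i 0 * (G.mulVec u) 0 + (G ^ n) i 1 * (G.mulVec u) 1 := by
        simp [Matrix.mulVec, dotProduct, Fin.sum_univ_two]
      have e2 : ((G ^ n).mulVec u) i = (G ^ n) i 0 * u 0 + (G ^ n) i 1 * u 1 := by
        simp [Matrix.mulVec, dotProduct, Fin.sum_univ_two]
      rw [e]
      have e3 : r ^ (n + 1) * u i = r * (r ^ n * u i) := by ring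
      have e2' : r * ((G ^ n).mulVec u i)
          = r * ((G ^ n) i 0 * u 0 + (G ^ n) i 1 * u 1) := by rw [e2]
      nlinarith only [mul_le_mul_of_nonneg_left (hGu 0) (hpow0 n i 0),
        mul_le_mul_of_nonneg_left (hGu 1) (hpow0 n i 1),
        mul_le_mul_of_nonneg_left (ih i) hr0, e2, e3, e2']
  have hentry : ∀ n : ℕ, ∀ i j, (G ^ n) i j ≤ r ^ n * (u i / u j) := by
    intro n i j
    have e2 : ((G ^ n).mulVec u) i = ∑ k, (G ^ n) i k * u k := rfl
    have h1 : (G ^ n) i j * u j ≤ ((G ^ n).mulVec u) i := by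
      rw [e2]
      exact Finset.single_le_sum (f := fun k => (G ^ n) i k * u k)
        (fun k _ => mul_nonneg (hpow0 n i k) (hu k).le) (Finset.mem_univ j)
    have h2 := le_trans h1 (hpowu n i)
    rw [← mul_div_assoc, le_div_iff₀ (hu j)]
    exact h2
  have htendG : ∀ i j, Tendsto (fun n => (G ^ n) i j) atTop (nhds 0) := by
    intro i j
    apply squeeze_zero (fun n => hpow0 n i j) (fun n => hentry n i j)
    have h := (tendsto_pow_atTop_nhds_zero_of_lt_one hr0 hr1).mul_const (u i / u j)
    simpa using h
  have hHasSum : HasSum (fun s : ℕ => G ^ s) (1 - G)⁻¹ := by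
    refine Pi.hasSum.2 ?_
    intro i
    rw [Pi.hasSum]
    intro j
    rw [hasSum_iff_tendsto_nat_of_nonneg (fun s => hpow0 s i j)]
    have hrw : ∀ n : ℕ, ∑ s ∈ range n, (G ^ s) i j = (((1 - G ^ n) * (1 - G)⁻¹ : Matrix (Fin 2) (Fin 2) ℝ)) i j := by
      intro n
      rw [← hps n, Matrix.sum_apply]
    have hlim : Tendsto (fun n => (((1 - G ^ n) * (1 - G)⁻¹ : Matrix (Fin 2) (Fin 2) ℝ)) i j) atTop
        (nhds ((1 - G)⁻¹ i j)) := by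
      have e : ∀ n : ℕ, (((1 - G ^ n) * (1 - G)⁻¹ : Matrix (Fin 2) (Fin 2) ℝ)) i j
          = ∑ k, ((1:Matrix (Fin 2) (Fin 2) ℝ) i k - (G ^ n) i k) * (1 - G)⁻¹ k j := by
        intro n
        rw [Matrix.mul_apply]
        apply Finset.sum_congr rfl
        intro k _
        rw [Matrix.sub_apply]
      have efin : ((1 - G)⁻¹ : Matrix (Fin 2) (Fin 2) ℝ) i j
          = ∑ k, (1:Matrix (Fin 2) (Fin 2) ℝ) i k * (1 - G)⁻¹ k j := by
        conv_lhs => rw [← one_mul ((1 - G)⁻¹ : Matrix (Fin 2) (Fin 2) ℝ)]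
        rw [Matrix.mul_apply]
      rw [efin]
      refine Tendsto.congr (fun n => (e n).symm) ?_
      apply tendsto_finset_sum
      intro k _
      have h1 : Tendsto (fun n : ℕ => (1:Matrix (Fin 2) (Fin 2) ℝ) i k - (G ^ n) i k) atTop
          (nhds ((1:Matrix (Fin 2) (Fin 2) ℝ) i k)) := by
        have h := (htendG i k).const_sub ((1:Matrix (Fin 2) (Fin 2) ℝ) i k)
        simpa using h
      exact h1.mul_const _
    exact hlim.congr (fun n => (hrw n).symm)
  -- entrywise bound on the inverse
  have hSentries : ((1:Matrix (Fin 2) (Fin 2) ℝ) - G)⁻¹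
      = (t * (1 - d) - b * c)⁻¹ • !![1 - d, b; c, t] := by
    rw [Matrix.inv_def, hone, Matrix.adjugate_fin_two_of, Matrix.det_fin_two_of,
      Ring.inverse_eq_inv']
    congr 1
    · ring_nf
    · simp
  have hΔinv : (t * (1 - d) - b * c)⁻¹ ≤ 2 / t ^ 2 := by
    have h := inv_anti₀ (show (0:ℝ) < t ^ 2 / 2 by positivity) hΔ
    calc (t * (1 - d) - b * c)⁻¹ ≤ (t ^ 2 / 2)⁻¹ := h
      _ = 2 / t ^ 2 := by rw [inv_div]
  have hΔinv0 : 0 ≤ (t * (1 - d) - b * c)⁻¹ := by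
    apply inv_nonneg.mpr; nlinarith only [hΔ, sq_nonneg t]
  have h1d0 : (0:ℝ) ≤ 1 - d := by linarith [hd1]
  have h1dt : 1 - d ≤ t := by linarith [hαd]
  have hbound : ∀ i j, ((1:Matrix (Fin 2) (Fin 2) ℝ) - G)⁻¹ i j ≤
      !![2 / t, 4 * α ^ 2 * η ^ 2 * L ^ 2 / t ^ 3;
         32 * α ^ 2 / t ^ 3, 2 / t] i j := by
    intro i j
    rw [hSentries]
    fin_cases i <;> fin_cases j <;> simp [Matrix.smul_apply, smul_eq_mul]
    · calc (t * (1 - d) - b * c)⁻¹ * (1 - d) ≤ (2 / t ^ 2) * t :=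
          mul_le_mul hΔinv h1dt h1d0 (by positivity)
        _ = 2 / t := by field_simp
    · calc (t * (1 - d) - b * c)⁻¹ * b ≤ (2 / t ^ 2) * b :=
          mul_le_mul_of_nonneg_right hΔinv hb0
        _ = 4 * α ^ 2 * η ^ 2 * L ^ 2 / t ^ 3 := by rw [hbdef]; field_simp; ring
    · calc (t * (1 - d) - b * c)⁻¹ * c ≤ (2 / t ^ 2) * c :=
          mul_le_mul_of_nonneg_right hΔinv hc0
        _ = 32 * α ^ 2 / t ^ 3 := by rw [hcdef]; field_simp; ring
    · calc (t * (1 - d) - b * c)⁻¹ * t ≤ (2 / t ^ 2) * t :=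
          mul_le_mul_of_nonneg_right hΔinv ht.le
        _ = 2 / t := by field_simp
  exact ⟨hspec, hUnit, hHasSum, hbound⟩
end
end

section
/- (Claim 2) Let α_in, α_out ∈ (0,1) and η, L > 0 satisfy η·L ≤ (1−α_in)^{3/2}·(1−α_out)/(4·√6·α_in·α_out). Define c = 4α_in²η²L²/(1−α_in)², d = 4α_out²/(1−α_out), and the 2×2 matrix G with rows [α_in, c] and [d·(1+α_in), α_out + c·d]. Then every eigenvalue of G lies in the open interval (−1, 1), I₂ − G is invertible, the Neumann series Σ_{t=0}^∞ Gᵗ converges to (I₂ − G)^{−1}, and entrywise (I₂ − G)^{−1} ≤ the matrix with rows [2/(1−α_in), 8α_in²η²L²/((1−α_in)³(1−α_out))] and [16α_out²/((1−α_in)(1−α_out)²), 2/(1−α_out)]. -/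
noncomputable section

set_option maxHeartbeats 2000000

attribute [local instance] Matrix.linftyOpNormedAddCommGroup Matrix.linftyOpNormedRing
  Matrix.linftyOpNormedAlgebra

/-- Claim 2. For `α_in, α_out ∈ (0,1)`, `η, L > 0` with
`ηL ≤ (1−α_in)^{3/2}(1−α_out)/(4√6·α_in·α_out)`, setting
`c = 4α_in²η²L²/(1−α_in)²`, `d = 4α_out²/(1−α_out)` and
`G = [[α_in, c], [d(1+α_in), α_out + cd]]`, all eigenvalues of `G` lie in `(−1,1)`,
`I₂ − G` is invertible, the Neumann series `Σ Gᵗ` converges to `(I₂ − G)⁻¹`, and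
entrywise `(I₂ − G)⁻¹ ≤ [[2/(1−α_in), 8α_in²η²L²/((1−α_in)³(1−α_out))],
[16α_out²/((1−α_in)(1−α_out)²), 2/(1−α_out)]]`. -/
theorem neumann_series_outer (αin αout η L : ℝ)
    (hαin : αin ∈ Set.Ioo (0 : ℝ) 1) (hαout : αout ∈ Set.Ioo (0 : ℝ) 1)
    (hη : 0 < η) (hL : 0 < L)
    (hstep : η * L ≤ (1 - αin) ^ ((3 : ℝ) / 2) * (1 - αout) /
      (4 * Real.sqrt 6 * αin * αout))
    (c d : ℝ) (hc : c = 4 * αin ^ 2 * η ^ 2 * L ^ 2 / (1 - αin) ^ 2)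
    (hd : d = 4 * αout ^ 2 / (1 - αout))
    (G : Matrix (Fin 2) (Fin 2) ℝ)
    (hG : G = !![αin, c; d * (1 + αin), αout + c * d]) :
    (∀ μ ∈ spectrum ℝ G, μ ∈ Set.Ioo (-1 : ℝ) 1) ∧
    IsUnit (1 - G) ∧
    HasSum (fun t : ℕ => G ^ t) (1 - G)⁻¹ ∧
    (∀ i j, (1 - G)⁻¹ i j ≤
      !![2 / (1 - αin), 8 * αin ^ 2 * η ^ 2 * L ^ 2 / ((1 - αin) ^ 3 * (1 - αout));
         16 * αout ^ 2 / ((1 - αin) * (1 - αout) ^ 2), 2 / (1 - αout)] i j) := by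
  obtain ⟨ha0, ha1⟩ := hαin
  obtain ⟨hb0, hb1⟩ := hαout
  have h1a : 0 < 1 - αin := by linarith
  have h1b : 0 < 1 - αout := by linarith
  have hc0 : 0 < c := by rw [hc]; positivity
  have hd0 : 0 < d := by rw [hd]; positivity
  have hX : 0 < (1 - αin) * (1 - αout) := mul_pos h1a h1b
  -- squared form of the step-size assumption
  have hsqrt6 : Real.sqrt 6 ^ 2 = 6 := Real.sq_sqrt (by norm_num)
  have hrpow : ((1 - αin) ^ ((3 : ℝ) / 2)) ^ 2 = (1 - αin) ^ 3 := by
    rw [← Real.rpow_natCast ((1 - αin) ^ ((3 : ℝ) / 2)) 2, ← Real.rpow_mul h1a.le]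
    norm_num
  have hden : 0 < 4 * Real.sqrt 6 * αin * αout := by positivity
  have hstep2 : η * L * (4 * Real.sqrt 6 * αin * αout) ≤
      (1 - αin) ^ ((3 : ℝ) / 2) * (1 - αout) := by
    rw [← le_div_iff₀ hden]; exact hstep
  have h2 : (η * L * (4 * Real.sqrt 6 * αin * αout)) ^ 2 ≤
      ((1 - αin) ^ ((3 : ℝ) / 2) * (1 - αout)) ^ 2 :=
    pow_le_pow_left₀ (by positivity) hstep2 2
  have e1 : (η * L * (4 * Real.sqrt 6 * αin * αout)) ^ 2 =
      Real.sqrt 6 ^ 2 * (16 * η ^ 2 * L ^ 2 * αin ^ 2 * αout ^ 2) := by ring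
  have e2 : ((1 - αin) ^ ((3 : ℝ) / 2) * (1 - αout)) ^ 2 =
      ((1 - αin) ^ ((3 : ℝ) / 2)) ^ 2 * (1 - αout) ^ 2 := by ring
  rw [e1, hsqrt6, e2, hrpow] at h2
  have hkey : 96 * (η ^ 2 * L ^ 2 * αin ^ 2 * αout ^ 2) ≤ (1 - αin) ^ 3 * (1 - αout) ^ 2 := by
    linarith
  have hcd : c * d ≤ (1 - αin) * (1 - αout) / 6 := by
    rw [hc, hd, div_mul_div_comm, div_le_div_iff₀ (by positivity) (by norm_num : (0 : ℝ) < 6)]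
    nlinarith [hkey]
  have hcd0 : 0 < c * d := mul_pos hc0 hd0
  -- determinant of 1 - G
  have h1G : (1 : Matrix (Fin 2) (Fin 2) ℝ) - G =
      !![1 - αin, -c; -(d * (1 + αin)), 1 - (αout + c * d)] := by
    subst hG
    ext i j
    fin_cases i <;> fin_cases j <;> simp [Matrix.sub_apply, Matrix.one_apply]
  have hdet1G : (1 - G).det = (1 - αin) * (1 - αout) - 2 * (c * d) := by
    rw [h1G, Matrix.det_fin_two_of]; ring
  have hΔ0 : 0 < (1 - αin) * (1 - αout) - 2 * (c * d) := by linarith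
  have hunit : IsUnit (1 - G) :=
    (Matrix.isUnit_iff_isUnit_det _).mpr (isUnit_iff_ne_zero.mpr (by rw [hdet1G]; exact hΔ0.ne'))
  -- spectrum
  have hspec : ∀ μ ∈ spectrum ℝ G, μ ∈ Set.Ioo (-1 : ℝ) 1 := by
    intro μ hμ
    rw [spectrum.mem_iff] at hμ
    have hdet0 : (algebraMap ℝ (Matrix (Fin 2) (Fin 2) ℝ) μ - G).det = 0 := by
      by_contra h
      exact hμ ((Matrix.isUnit_iff_isUnit_det _).mpr (isUnit_iff_ne_zero.mpr h))
    rw [Matrix.det_fin_two] at hdet0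
    have heq : μ ^ 2 - (αin + αout + c * d) * μ + (αin * αout - c * d) = 0 := by
      subst hG
      simp [Matrix.algebraMap_matrix_apply, Matrix.sub_apply] at hdet0
      linear_combination hdet0
    have hτ0 : 0 < αin + αout + c * d := by linarith
    have hτ2 : αin + αout + c * d < 2 := by nlinarith [hcd, hX, mul_pos h1a hb0]
    constructor
    · by_contra h
      push_neg at h
      have hprod : 0 ≤ (-(μ + 1)) * ((αin + αout + c * d) + 1 - μ) :=
        mul_nonneg (by linarith) (by linarith)
      nlinarith [heq, hprod, mul_pos (by linarith : (0:ℝ) < 1 + αin) (by linarith : (0:ℝ) < 1 + αout)]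
    · by_contra h
      push_neg at h
      have hprod : 0 ≤ (μ - 1) * (μ + 1 - (αin + αout + c * d)) :=
        mul_nonneg (by linarith) (by linarith)
      nlinarith [heq, hprod, hΔ0]
  -- Neumann series via a diagonal conjugation
  set w : ℝ := 2 * c / (1 - αin) with hw
  have hw0 : 0 < w := by rw [hw]; positivity
  set D : Matrix (Fin 2) (Fin 2) ℝ := !![(1 : ℝ), 0; 0, w] with hD
  set E : Matrix (Fin 2) (Fin 2) ℝ := !![(1 : ℝ), 0; 0, w⁻¹] with hE
  set H : Matrix (Fin 2) (Fin 2) ℝ :=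
    !![αin, (1 - αin) / 2; w * (d * (1 + αin)), αout + c * d] with hH
  have hDE : D * E = 1 := by
    rw [hD, hE, Matrix.mul_fin_two, Matrix.one_fin_two, mul_inv_cancel₀ hw0.ne']
    norm_num
  have hED : E * D = 1 := by
    rw [hD, hE, Matrix.mul_fin_two, Matrix.one_fin_two, inv_mul_cancel₀ hw0.ne']
    norm_num
  have hEHD : E * H * D = G := by
    subst hG
    rw [hD, hE, hH, Matrix.mul_fin_two, Matrix.mul_fin_two]
    have hco : (1 - αin) / 2 * w = c := by
      rw [hw]; field_simp
    ext i j
    fin_cases i <;> fin_cases j <;> simp [hco] <;> field_simp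
  have hDGE : D * G * E = H := by
    rw [← hEHD, show D * (E * H * D) * E = D * E * H * (D * E) by noncomm_ring, hDE]
    simp
  have h1H : D * (1 - G) * E = 1 - H := by
    rw [Matrix.mul_sub, Matrix.mul_one, Matrix.sub_mul, hDE, hDGE]
  have h1G' : E * (1 - H) * D = 1 - G := by
    rw [← h1H, show E * (D * (1 - G) * E) * D = E * D * (1 - G) * (E * D) by noncomm_ring, hED]
    simp
  -- norm of H is < 1
  have key2 : w * (d * (1 + αin)) + (αout + c * d) < 1 := by
    have hwexp : w * (d * (1 + αin)) = 2 * (c * d) * (1 + αin) / (1 - αin) := by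
      rw [hw]; ring
    rw [hwexp, div_add' _ _ _ h1a.ne', div_lt_one h1a]
    nlinarith [mul_nonneg (by linarith [hcd] : (0:ℝ) ≤ (1 - αin) * (1 - αout) / 6 - c * d)
      (by linarith : (0:ℝ) ≤ 3 + αin), hX]
  have hrow : ∀ i : Fin 2, ‖H i 0‖ + ‖H i 1‖ < 1 := by
    intro i
    fin_cases i <;>
      simp only [hH, Matrix.cons_val', Matrix.cons_val_zero, Matrix.cons_val_one,
        Matrix.head_cons, Matrix.empty_val', Matrix.cons_val_fin_one, Matrix.head_fin_const,
        Matrix.of_apply, Fin.mk_zero, Fin.mk_one]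
    · rw [Real.norm_of_nonneg ha0.le,
        Real.norm_of_nonneg (by linarith : (0:ℝ) ≤ (1 - αin) / 2)]
      linarith
    · rw [Real.norm_of_nonneg (mul_nonneg hw0.le
          (mul_nonneg hd0.le (by linarith : (0:ℝ) ≤ 1 + αin))),
        Real.norm_of_nonneg (by linarith : (0:ℝ) ≤ αout + c * d)]
      exact key2
  have hHnorm : ‖H‖ < 1 := by
    have hnn : ‖H‖₊ < 1 := by
      rw [Matrix.linfty_opNNNorm_def, Finset.sup_lt_iff (by norm_num : (⊥ : NNReal) < 1)]
      intro i _
      rw [Fin.sum_univ_two, ← NNReal.coe_lt_coe]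
      push_cast
      simpa [coe_nnnorm] using hrow i
    have h' : ((‖H‖₊ : ℝ)) < 1 := by exact_mod_cast hnn
    rwa [coe_nnnorm] at h'
  -- geometric series for H
  have hsummable : Summable (fun t : ℕ => H ^ t) := summable_geometric_of_norm_lt_one hHnorm
  have hS2 : (1 - H) * (∑' t : ℕ, H ^ t) = 1 := mul_neg_geom_series H hHnorm
  set S : Matrix (Fin 2) (Fin 2) ℝ := ∑' t : ℕ, H ^ t with hS
  have hSsum : HasSum (fun t : ℕ => H ^ t) S := hsummable.hasSum
  have hmapsum : HasSum (fun t : ℕ => E * H ^ t * D) (E * S * D) := by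
    have hcont : Continuous fun X : Matrix (Fin 2) (Fin 2) ℝ => E * X * D :=
      (continuous_mul_right D).comp (continuous_mul_left E)
    have := hSsum.map ((AddMonoidHom.mulRight D).comp (AddMonoidHom.mulLeft E)) hcont
    exact this
  have hpow : ∀ t : ℕ, E * H ^ t * D = G ^ t := by
    intro t
    induction t with
    | zero => simpa using hED
    | succ n ih =>
      calc E * H ^ (n + 1) * D = (E * H ^ n * D) * (E * H * D) := by
            rw [pow_succ,
              show (E * H ^ n * D) * (E * H * D) = E * H ^ n * (D * E) * (H * D) by
                noncomm_ring, hDE]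
            noncomm_ring
        _ = G ^ (n + 1) := by rw [ih, hEHD, pow_succ]
  have hGsum : HasSum (fun t : ℕ => G ^ t) (E * S * D) := by
    have hfun : (fun t : ℕ => E * H ^ t * D) = fun t : ℕ => G ^ t := funext hpow
    rwa [hfun] at hmapsum
  have hESD : E * S * D = (1 - G)⁻¹ := by
    refine (Matrix.inv_eq_right_inv ?_).symm
    calc (1 - G) * (E * S * D) = (E * (1 - H) * D) * (E * S * D) := by rw [h1G']
      _ = E * ((1 - H) * S) * D := by
          rw [show (E * (1 - H) * D) * (E * S * D) = E * (1 - H) * (D * E) * (S * D) by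
              noncomm_ring, hDE]
          noncomm_ring
      _ = 1 := by rw [hS2, Matrix.mul_one, hED]
  -- the entrywise bound
  have hinv : (1 - G)⁻¹ = ((1 - αin) * (1 - αout) - 2 * (c * d))⁻¹ •
      !![1 - (αout + c * d), c; d * (1 + αin), 1 - αin] := by
    rw [Matrix.inv_def, hdet1G, h1G, Matrix.adjugate_fin_two, Ring.inverse_eq_inv']
    norm_num
  refine ⟨hspec, hunit, by rw [← hESD]; exact hGsum, ?_⟩
  have h2d : (1 - αin) * (1 - αout) ≤ 2 * ((1 - αin) * (1 - αout) - 2 * (c * d)) := by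
    linarith
  intro i j
  fin_cases i <;> fin_cases j <;>
    rw [hinv] <;>
    simp only [Matrix.smul_apply, smul_eq_mul, Matrix.cons_val', Matrix.cons_val_zero,
      Matrix.cons_val_one, Matrix.head_cons, Matrix.empty_val', Matrix.cons_val_fin_one,
      Matrix.head_fin_const, Matrix.of_apply, Fin.mk_zero, Fin.mk_one]
  · rw [inv_mul_eq_div, div_le_div_iff₀ hΔ0 h1a]
    nlinarith [mul_nonneg (by linarith : (0:ℝ) ≤ (1 - αin) * (1 - αout) / 6 - c * d)
        (by linarith : (0:ℝ) ≤ 3 + αin),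
      mul_nonneg hX.le (by linarith : (0:ℝ) ≤ 3 - αin)]
  · rw [inv_mul_eq_div, div_le_div_iff₀ hΔ0 (by positivity : (0:ℝ) < (1 - αin) ^ 3 * (1 - αout))]
    have hcval : c * ((1 - αin) ^ 3 * (1 - αout)) =
        4 * αin ^ 2 * η ^ 2 * L ^ 2 * ((1 - αin) * (1 - αout)) := by
      rw [hc]; field_simp
    rw [hcval]
    nlinarith [mul_nonneg (by positivity : (0:ℝ) ≤ αin ^ 2 * η ^ 2 * L ^ 2)
      (by linarith : (0:ℝ) ≤ 2 * ((1 - αin) * (1 - αout) - 2 * (c * d)) -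
        (1 - αin) * (1 - αout))]
  · rw [inv_mul_eq_div, div_le_div_iff₀ hΔ0 (by positivity : (0:ℝ) < (1 - αin) * (1 - αout) ^ 2)]
    have hdval : d * ((1 - αin) * (1 - αout) ^ 2) =
        4 * αout ^ 2 * ((1 - αin) * (1 - αout)) := by
      rw [hd]; field_simp
    have hrw : d * (1 + αin) * ((1 - αin) * (1 - αout) ^ 2) =
        (1 + αin) * (4 * αout ^ 2 * ((1 - αin) * (1 - αout))) := by
      rw [← hdval]; ring
    rw [hrw]
    nlinarith [mul_nonneg (sq_nonneg αout)
      (by nlinarith [hcd, hX, mul_nonneg h1a.le hX.le] :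
        (0:ℝ) ≤ 4 * ((1 - αin) * (1 - αout) - 2 * (c * d)) -
          (1 + αin) * ((1 - αin) * (1 - αout)))]
  · rw [inv_mul_eq_div, div_le_div_iff₀ hΔ0 h1b]
    linarith
end
end

section
/- Let L > 0, let n, b, S be real numbers with n, b, S ≥ 1, and let α_in, α_out ∈ [0,1). Define Q(η) = (2 + 15·α_in²·α_out²·n·b/((1−α_in)²·(1−α_out)²))·(2·S·η²·L²/(n·b)) + 2·η·L − 1. Then for every η with 0 < η ≤ (1−α_in)·(1−α_out)/((1 + α_in·α_out·√(n·b))·6·L·(√(S/(n·b)) + 1)), one has Q(η) < 0. -/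
noncomputable section

set_option maxHeartbeats 800000 in
lemma key_poly (W c v m : ℝ) (hW0 : 0 < W) (hW1 : W ≤ 1) (hc : 0 ≤ c)
    (hv : 0 ≤ v) (hm : 0 < m) (h : 6*m*(1+c)*(v+1) ≤ W) :
    (2*W^2 + 15*c^2) * (2*v^2*m^2) + (2*m - 1)*W^2 < 0 := by
  have hx1 : (1:ℝ) ≤ 1 + c := by linarith
  have hu1 : (1:ℝ) ≤ v + 1 := by linarith
  have hW2 : W^2 ≤ 1 := by nlinarith
  have h36 : 36*m^2*(1+c)^2*(v+1)^2 ≤ W^2 := by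
    nlinarith [mul_pos (mul_pos hm (by linarith : (0:ℝ) < 1+c)) (by linarith : (0:ℝ) < v+1)]
  have hvu : v^2 ≤ (v+1)^2 := by nlinarith
  have h1 : 36*m^2*(1+c)^2*v^2 ≤ W^2 := by
    nlinarith [mul_le_mul_of_nonneg_left hvu (by positivity : (0:ℝ) ≤ 36*m^2*(1+c)^2)]
  have h1' : 72*(1+c)^2*W^2*v^2*m^2 ≤ 2*W^2 := by
    nlinarith [mul_le_mul_of_nonneg_left h1 (by positivity : (0:ℝ) ≤ 2*W^2),
      mul_le_mul_of_nonneg_left hW2 (by positivity : (0:ℝ) ≤ 2*W^2)]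
  have h2 : 540*c^2*v^2*m^2*(1+c)^2 ≤ 15*c^2*W^2 := by
    have := mul_le_mul_of_nonneg_left h1 (by positivity : (0:ℝ) ≤ 15*c^2)
    linarith
  have h6 : 6*m*(1+c) ≤ 1 := by
    nlinarith [mul_le_mul_of_nonneg_left hu1 (le_of_lt (by positivity : (0:ℝ) < 6*m*(1+c)))]
  have h3 : 36*m*W^2*(1+c)^2 ≤ 6*(1+c)*W^2 := by
    nlinarith [mul_le_mul_of_nonneg_left h6 (by positivity : (0:ℝ) ≤ 6*(1+c)*W^2)]
  have h4 : 2*W^2 + 15*c^2*W^2 + 6*(1+c)*W^2 < 18*(1+c)^2*W^2 := by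
    have hp : 0 < (3*c^2 + 30*c + 10) * W^2 := by positivity
    nlinarith [hp]
  have hfin : ((2*W^2 + 15*c^2) * (2*v^2*m^2) + (2*m - 1)*W^2) * (18*(1+c)^2) < 0 := by
    nlinarith [h1', h2, h3, h4]
  exact neg_of_mul_neg_left hfin (by positivity)

set_option maxHeartbeats 1000000 in
/-- With `Q(η) = (2 + 15α_in²α_out²nb/((1−α_in)²(1−α_out)²))·(2Sη²L²/(nb))
+ 2ηL − 1`, every step size `0 < η ≤ (1−α_in)(1−α_out)/((1 + α_in α_out √(nb))·6L(√(S/(nb)) + 1))`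
satisfies `Q(η) < 0`. -/
theorem step_size_negative (L n b S αin αout : ℝ) (hL : 0 < L)
    (hn : 1 ≤ n) (hb : 1 ≤ b) (hS : 1 ≤ S)
    (hαin : αin ∈ Set.Ico (0 : ℝ) 1) (hαout : αout ∈ Set.Ico (0 : ℝ) 1)
    (η : ℝ) (hη0 : 0 < η)
    (hη : η ≤ (1 - αin) * (1 - αout) /
      ((1 + αin * αout * Real.sqrt (n * b)) * (6 * L * (Real.sqrt (S / (n * b)) + 1)))) :
    (2 + 15 * αin ^ 2 * αout ^ 2 * n * b / ((1 - αin) ^ 2 * (1 - αout) ^ 2)) *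
        (2 * S * η ^ 2 * L ^ 2 / (n * b)) + 2 * η * L - 1 < 0 := by
  obtain ⟨hin0, hin1⟩ := hαin
  obtain ⟨hout0, hout1⟩ := hαout
  have hnb1 : (1:ℝ) ≤ n * b := by nlinarith
  have hnb0 : (0:ℝ) < n * b := by linarith
  set s := Real.sqrt (n * b) with hs
  have hs2 : s ^ 2 = n * b := Real.sq_sqrt (le_of_lt hnb0)
  have hs0 : 0 ≤ s := Real.sqrt_nonneg _
  set v := Real.sqrt (S / (n * b)) with hv
  have hv0 : 0 ≤ v := Real.sqrt_nonneg _
  have hv2 : v ^ 2 = S / (n * b) := Real.sq_sqrt (by positivity)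
  have hS' : S = v ^ 2 * (n * b) := by
    rw [hv2]; field_simp
  set A := 1 - αin with hA
  set B := 1 - αout with hB
  have hA0 : 0 < A := by simp [hA]; linarith
  have hA1 : A ≤ 1 := by simp [hA]; linarith
  have hB0 : 0 < B := by simp [hB]; linarith
  have hB1 : B ≤ 1 := by simp [hB]; linarith
  set c := αin * αout * s with hc
  have hc0 : 0 ≤ c := by positivity
  have hden : 0 < (1 + c) * (6 * L * (v + 1)) := by positivity
  have hmain : 6 * (η * L) * (1 + c) * (v + 1) ≤ A * B := by
    have := (le_div_iff₀ hden).mp hη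
    linarith [this, (by ring : η * ((1 + c) * (6 * L * (v + 1))) = 6 * (η * L) * (1 + c) * (v + 1))]
  have hW0 : 0 < A * B := mul_pos hA0 hB0
  have hW1 : A * B ≤ 1 := by nlinarith
  have hkey := key_poly (A * B) c v (η * L) hW0 hW1 hc0 hv0 (by positivity) hmain
  have hterm : 2 * S * η ^ 2 * L ^ 2 / (n * b) = 2 * v ^ 2 * η ^ 2 * L ^ 2 := by
    rw [hS']; field_simp
  have hc2 : 15 * αin ^ 2 * αout ^ 2 * n * b = 15 * c ^ 2 := by
    rw [hc, mul_pow, mul_pow, hs2]; ring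
  have hid : ((2 + 15 * c ^ 2 / (A ^ 2 * B ^ 2)) *
        (2 * v ^ 2 * η ^ 2 * L ^ 2) + 2 * η * L - 1) * ((A * B) ^ 2)
      = (2*(A*B)^2 + 15*c^2) * (2*v^2*(η*L)^2) + (2*(η*L) - 1)*(A*B)^2 := by
    have hA' : A ≠ 0 := ne_of_gt hA0
    have hB' : B ≠ 0 := ne_of_gt hB0
    field_simp
    ring
  have hneg : ((2 + 15 * c ^ 2 / (A ^ 2 * B ^ 2)) *
        (2 * v ^ 2 * η ^ 2 * L ^ 2) + 2 * η * L - 1) * ((A * B) ^ 2) < 0 := by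
    rw [hid]; exact hkey
  rw [mul_comm 15 (αin ^ 2)] at hc2
  rw [show 15 * αin ^ 2 * αout ^ 2 * n * b = αin ^ 2 * 15 * αout ^ 2 * n * b by ring, hc2, hterm]
  exact neg_of_mul_neg_left hneg (sq_nonneg (A * B))
end
end

section
/- Let W ∈ ℝ^{n×n} be a mixing matrix with mixing rate α ≤ 1, let η ∈ ℝ, and let u, v ∈ ℝ^{nd} with block averages ū, v̄. Then ‖(W ⊗ I_d)(u − η·v) − u‖₂² ≤ 8·‖u − 1_n ⊗ ū‖₂² + 2·α²·η²·‖v − 1_n ⊗ v̄‖₂² + η²·n·‖v̄‖₂². -/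
open Finset

noncomputable section

/-- `ℝ^{nd}` as a stack of `n` blocks in `ℝ^d`, with the Euclidean (ℓ₂) norm. -/
abbrev Stacked (n d : ℕ) := PiLp 2 (fun _ : Fin n => Vec d)

/-- Block average `x̄ = (1/n) Σᵢ xᵢ` of a stacked vector. -/
def blockAvg {n d : ℕ} (x : Stacked n d) : Vec d := (n : ℝ)⁻¹ • ∑ i, x i

/-- The stacked vector `1ₙ ⊗ y` whose every block equals `y`. -/
def stack (n : ℕ) {d : ℕ} (y : Vec d) : Stacked n d := WithLp.toLp 2 (fun _ => y)

/-- Action of `W ⊗ I_d` on a stacked vector. -/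
def kronApply {n d : ℕ} (W : Matrix (Fin n) (Fin n) ℝ) (x : Stacked n d) : Stacked n d :=
  WithLp.toLp 2 (fun i => ∑ j, W i j • x j)

/-- A mixing matrix: `W·1ₙ = 1ₙ` and `Wᵀ·1ₙ = 1ₙ`. -/
def IsMixing {n : ℕ} (W : Matrix (Fin n) (Fin n) ℝ) : Prop :=
  W.mulVec (fun _ => 1) = (fun _ => 1) ∧ Matrix.vecMul (fun _ => 1) W = (fun _ => 1)

/-- The mixing rate `α = ‖W − (1/n)1ₙ1ₙᵀ‖_op` (ℓ₂ operator norm). -/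
def mixingRate {n : ℕ} (W : Matrix (Fin n) (Fin n) ℝ) : ℝ :=
  ‖LinearMap.toContinuousLinearMap
    (Matrix.toEuclideanLin (W - (n : ℝ)⁻¹ • Matrix.of fun _ _ => (1 : ℝ)))‖

/-! Write `x̃ = x - 1ₙ ⊗ x̄` for the centred part of a stacked vector. Since `W` fixes
`1ₙ ⊗ x̄` and preserves block sums,
`(W ⊗ I)(u - ηv) - u = ((W ⊗ I)ũ - ũ - η (W ⊗ I)ṽ) - η (1ₙ ⊗ v̄)`,
where the first summand has block sum zero and hence is orthogonal to the second. On vectors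
with block sum zero `W ⊗ I` agrees with `(W - J) ⊗ I`, `J = (1/n)1ₙ1ₙᵀ`, so it has norm at most
`α`; this gives `‖(W ⊗ I)ũ - ũ‖ ≤ 2‖ũ‖` and `‖(W ⊗ I)ṽ‖ ≤ α‖ṽ‖`, and
`‖a - b‖² ≤ 2‖a‖² + 2‖b‖²` finishes the proof. -/

section Stacked

variable {n d : ℕ}

lemma stack_smul (c : ℝ) (y : Vec d) : stack n (c • y) = c • stack n y := rfl

lemma inner_stack_right (z : Stacked n d) (w : Vec d) :
    inner ℝ z (stack n w) = inner ℝ (∑ i, z i) w := by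
  rw [PiLp.inner_apply, sum_inner]
  rfl

lemma norm_stack_sq (w : Vec d) : ‖stack n w‖ ^ 2 = n * ‖w‖ ^ 2 := by
  simp [stack, PiLp.norm_sq_eq_of_L2]

lemma norm_add_stack_sq {z : Stacked n d} (hz : ∑ i, z i = 0) (w : Vec d) :
    ‖z + stack n w‖ ^ 2 = ‖z‖ ^ 2 + n * ‖w‖ ^ 2 := by
  have horth : inner ℝ z (stack n w) = 0 := by rw [inner_stack_right, hz, inner_zero_left]
  rw [sq, sq, norm_add_sq_eq_norm_sq_add_norm_sq_real horth, ← sq, ← sq, norm_stack_sq]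

lemma sum_stack_blockAvg (x : Stacked n d) : ∑ i, stack n (blockAvg x) i = ∑ i, x i := by
  rcases Nat.eq_zero_or_pos n with rfl | hn
  · simp
  · simp [stack, blockAvg, Finset.sum_const, ← Nat.cast_smul_eq_nsmul ℝ,
      smul_inv_smul₀ (Nat.cast_ne_zero.mpr hn.ne' : (n : ℝ) ≠ 0)]

lemma sum_sub_stack_blockAvg (x : Stacked n d) : ∑ i, (x - stack n (blockAvg x)) i = 0 := by
  simp only [PiLp.sub_apply, Finset.sum_sub_distrib, sum_stack_blockAvg, sub_self]

lemma blockAvg_eq_zero {x : Stacked n d} (hx : ∑ i, x i = 0) : blockAvg x = 0 := by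
  rw [blockAvg, hx, smul_zero]

end Stacked

section KronApply

variable {n d : ℕ}

lemma kronApply_add_left (M N : Matrix (Fin n) (Fin n) ℝ) (x : Stacked n d) :
    kronApply (M + N) x = kronApply M x + kronApply N x := by
  ext i : 1
  simp [kronApply, add_smul, Finset.sum_add_distrib]

lemma kronApply_sub_left (M N : Matrix (Fin n) (Fin n) ℝ) (x : Stacked n d) :
    kronApply (M - N) x = kronApply M x - kronApply N x := by
  rw [eq_sub_iff_add_eq, ← kronApply_add_left, sub_add_cancel]

lemma kronApply_sub (M : Matrix (Fin n) (Fin n) ℝ) (x y : Stacked n d) :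
    kronApply M (x - y) = kronApply M x - kronApply M y := by
  ext i : 1
  simp [kronApply, smul_sub, Finset.sum_sub_distrib]

lemma kronApply_smul (M : Matrix (Fin n) (Fin n) ℝ) (c : ℝ) (x : Stacked n d) :
    kronApply M (c • x) = c • kronApply M x := by
  ext i : 1
  simp [kronApply, Finset.smul_sum, smul_comm c]

lemma kronApply_averaging (x : Stacked n d) :
    kronApply ((n : ℝ)⁻¹ • Matrix.of fun _ _ => (1 : ℝ)) x = stack n (blockAvg x) := by
  ext i : 1
  simp [kronApply, stack, blockAvg, Finset.smul_sum]

lemma kronApply_stack {W : Matrix (Fin n) (Fin n) ℝ} (hW : W.mulVec (fun _ => 1) = fun _ => 1)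
    (y : Vec d) : kronApply W (stack n y) = stack n y := by
  ext i : 1
  have hrow : ∑ j, W i j = 1 := by simpa [Matrix.mulVec, dotProduct] using congrFun hW i
  simp [kronApply, stack, ← Finset.sum_smul, hrow]

lemma sum_kronApply {W : Matrix (Fin n) (Fin n) ℝ}
    (hW : Matrix.vecMul (fun _ => 1) W = fun _ => 1) (x : Stacked n d) :
    ∑ i, kronApply W x i = ∑ i, x i := by
  have hcol : ∀ j, ∑ i, W i j = 1 := fun j => by
    simpa [Matrix.vecMul, dotProduct] using congrFun hW j
  simp only [kronApply, PiLp.toLp_apply]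
  rw [Finset.sum_comm]
  simp [← Finset.sum_smul, hcol]

lemma kronApply_eq_kronApply_sub_stack_add_stack {W : Matrix (Fin n) (Fin n) ℝ}
    (hW : W.mulVec (fun _ => 1) = fun _ => 1) (x : Stacked n d) :
    kronApply W x = kronApply W (x - stack n (blockAvg x)) + stack n (blockAvg x) := by
  rw [kronApply_sub, kronApply_stack hW, sub_add_cancel]

def coordSlice (x : Stacked n d) (k : Fin d) : EuclideanSpace ℝ (Fin n) :=
  WithLp.toLp 2 fun i => x i k

lemma norm_sq_eq_sum_norm_coordSlice_sq (x : Stacked n d) :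
    ‖x‖ ^ 2 = ∑ k, ‖coordSlice x k‖ ^ 2 := by
  simp only [PiLp.norm_sq_eq_of_L2, coordSlice]
  exact Finset.sum_comm

lemma coordSlice_kronApply (M : Matrix (Fin n) (Fin n) ℝ) (x : Stacked n d) (k : Fin d) :
    coordSlice (kronApply M x) k = Matrix.toEuclideanLin M (coordSlice x k) := by
  ext i
  simp [coordSlice, kronApply, Matrix.mulVec, dotProduct]

lemma norm_kronApply_le (M : Matrix (Fin n) (Fin n) ℝ) (x : Stacked n d) :
    ‖kronApply M x‖ ≤ ‖LinearMap.toContinuousLinearMap (Matrix.toEuclideanLin M)‖ * ‖x‖ := by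
  set C := ‖LinearMap.toContinuousLinearMap (Matrix.toEuclideanLin M)‖
  have hslice (k : Fin d) : ‖Matrix.toEuclideanLin M (coordSlice x k)‖ ^ 2 ≤
      C ^ 2 * ‖coordSlice x k‖ ^ 2 := by
    rw [← mul_pow]
    exact pow_le_pow_left₀ (norm_nonneg _)
      ((LinearMap.toContinuousLinearMap (Matrix.toEuclideanLin M)).le_opNorm _) 2
  refine le_of_pow_le_pow_left₀ two_ne_zero (by positivity) ?_
  calc ‖kronApply M x‖ ^ 2
      = ∑ k, ‖Matrix.toEuclideanLin M (coordSlice x k)‖ ^ 2 := by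
        simp only [norm_sq_eq_sum_norm_coordSlice_sq, coordSlice_kronApply]
    _ ≤ ∑ k, C ^ 2 * ‖coordSlice x k‖ ^ 2 := Finset.sum_le_sum fun k _ => hslice k
    _ = (C * ‖x‖) ^ 2 := by rw [← Finset.mul_sum, ← norm_sq_eq_sum_norm_coordSlice_sq, mul_pow]

lemma norm_kronApply_le_mixingRate_mul (W : Matrix (Fin n) (Fin n) ℝ) {x : Stacked n d}
    (hx : ∑ i, x i = 0) : ‖kronApply W x‖ ≤ mixingRate W * ‖x‖ := by
  have hkron : kronApply W x = kronApply (W - (n : ℝ)⁻¹ • Matrix.of fun _ _ => (1 : ℝ)) x := by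
    rw [kronApply_sub_left, kronApply_averaging, blockAvg_eq_zero hx]
    exact (sub_zero _).symm
  rw [hkron]
  exact norm_kronApply_le _ x

lemma norm_kronApply_sub_self_le {W : Matrix (Fin n) (Fin n) ℝ} (hW : mixingRate W ≤ 1)
    {x : Stacked n d} (hx : ∑ i, x i = 0) : ‖kronApply W x - x‖ ≤ 2 * ‖x‖ := calc
  ‖kronApply W x - x‖ ≤ mixingRate W * ‖x‖ + ‖x‖ :=
    (norm_sub_le _ _).trans (by gcongr; exact norm_kronApply_le_mixingRate_mul W hx)
  _ ≤ 2 * ‖x‖ := by nlinarith [norm_nonneg x]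

lemma kronApply_sub_smul_sub_self {W : Matrix (Fin n) (Fin n) ℝ}
    (hW : W.mulVec (fun _ => 1) = fun _ => 1) (η : ℝ) (u v : Stacked n d) :
    kronApply W (u - η • v) - u =
      (kronApply W (u - stack n (blockAvg u)) - (u - stack n (blockAvg u))
        - η • kronApply W (v - stack n (blockAvg v))) + stack n (-η • blockAvg v) := by
  rw [kronApply_sub, kronApply_smul, kronApply_eq_kronApply_sub_stack_add_stack hW u,
    kronApply_eq_kronApply_sub_stack_add_stack hW v, stack_smul]
  module

end KronApply

lemma norm_sub_smul_sq_le {E : Type*} [SeminormedAddCommGroup E] [NormedSpace ℝ E] {a b : E}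
    {A B : ℝ} (ha : ‖a‖ ≤ A) (hb : ‖b‖ ≤ B) (η : ℝ) :
    ‖a - η • b‖ ^ 2 ≤ 2 * A ^ 2 + 2 * η ^ 2 * B ^ 2 := calc
  ‖a - η • b‖ ^ 2 ≤ (‖a‖ + |η| * ‖b‖) ^ 2 := by
    gcongr; simpa [norm_smul] using norm_sub_le a (η • b)
  _ ≤ 2 * (‖a‖ ^ 2 + (|η| * ‖b‖) ^ 2) := add_sq_le
  _ ≤ 2 * (A ^ 2 + (|η| * B) ^ 2) := by gcongr
  _ = 2 * A ^ 2 + 2 * η ^ 2 * B ^ 2 := by rw [mul_pow, sq_abs]; ring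

/-- For a mixing matrix `W` with mixing rate `α ≤ 1`,
`‖(W ⊗ I_d)(u − ηv) − u‖² ≤ 8‖u − 1ₙ⊗ū‖² + 2α²η²‖v − 1ₙ⊗v̄‖² + η²n‖v̄‖²`. -/
theorem inner_step_difference_bound {n d : ℕ} (W : Matrix (Fin n) (Fin n) ℝ) (α : ℝ)
    (hW : IsMixing W) (hα : α = mixingRate W) (hα1 : α ≤ 1)
    (η : ℝ) (u v : Stacked n d) :
    ‖kronApply W (u - η • v) - u‖ ^ 2 ≤
      8 * ‖u - stack n (blockAvg u)‖ ^ 2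
      + 2 * α ^ 2 * η ^ 2 * ‖v - stack n (blockAvg v)‖ ^ 2
      + η ^ 2 * n * ‖blockAvg v‖ ^ 2 := by
  subst hα
  have hu := sum_sub_stack_blockAvg u
  have hv := sum_sub_stack_blockAvg v
  have hsum : ∑ i, (kronApply W (u - stack n (blockAvg u)) - (u - stack n (blockAvg u))
      - η • kronApply W (v - stack n (blockAvg v))) i = 0 := by
    simp only [PiLp.sub_apply, PiLp.smul_apply, Finset.sum_sub_distrib, ← Finset.smul_sum,
      sum_kronApply hW.2, sum_stack_blockAvg, sub_self, smul_zero]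
  have hbound := norm_sub_smul_sq_le (norm_kronApply_sub_self_le hα1 hu)
    (norm_kronApply_le_mixingRate_mul W hv) η
  rw [kronApply_sub_smul_sub_self hW.1, norm_add_stack_sq hsum, norm_smul, mul_pow,
    Real.norm_eq_abs, sq_abs]
  ring_nf at hbound ⊢
  linarith
end
end

section
/- Let G ∈ ℝ^{k×k} have nonnegative entries and spectral radius strictly less than 1 (so that the Neumann series Σ_{t=0}^∞ Gᵗ converges to (I_k − G)^{−1}). Let S ≥ 1 be an integer and let e^0, …, e^{S−1} and b^0, …, b^{S−1} be vectors in ℝ^k such that e^0 and every b^s have nonnegative entries and e^s ≤ G·e^{s−1} + b^{s−1} entrywise for all 1 ≤ s ≤ S−1. Then Σ_{s=0}^{S−1} e^s ≤ (I_k − G)^{−1}·(e^0 + Σ_{s=0}^{S−1} b^s) entrywise. -/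
open Finset

noncomputable section

open Filter

section aux
attribute [local instance] Matrix.linftyOpNormedRing Matrix.linftyOpNormedAlgebra

lemma entry_bound {k : ℕ} (A : Matrix (Fin k) (Fin k) ℂ)
    (hspec : spectralRadius ℂ A < 1) :
    ∃ r : ℝ, 0 ≤ r ∧ r < 1 ∧ ∃ C : ℝ, ∀ n (i j : Fin k), ‖(A ^ n) i j‖ ≤ C * r ^ n := by
  haveI : CompleteSpace (Matrix (Fin k) (Fin k) ℂ) := FiniteDimensional.complete ℂ _
  have hg := spectrum.pow_nnnorm_pow_one_div_tendsto_nhds_spectralRadius A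
  obtain ⟨r, hr1, hr2⟩ := ENNReal.lt_iff_exists_nnreal_btwn.mp hspec
  have hev : ∀ᶠ n : ℕ in atTop, ((‖A ^ n‖₊ : ENNReal) ^ (1 / (n:ℝ))) < r :=
    hg.eventually_lt_const hr1
  -- from this: eventually ‖A^n‖₊ ≤ r ^ n
  have hev2 : ∀ᶠ n : ℕ in atTop, ‖A ^ n‖₊ ≤ r ^ n := by
    filter_upwards [hev, eventually_gt_atTop 0] with n hn hn0
    have : ((‖A ^ n‖₊ : ENNReal) ^ (1 / (n:ℝ))) ^ (n:ℝ) ≤ (r:ENNReal) ^ (n:ℝ) := by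
      exact ENNReal.rpow_le_rpow hn.le (by positivity)
    rw [← ENNReal.rpow_mul, one_div, inv_mul_cancel₀ (by exact_mod_cast hn0.ne'),
      ENNReal.rpow_one, ENNReal.rpow_natCast, ← ENNReal.coe_pow] at this
    exact_mod_cast this
  have hr0 : (0:ℝ) < r := by
    have : (0:ENNReal) < r := lt_of_le_of_lt zero_le hr1
    exact_mod_cast this
  obtain ⟨N, hN⟩ := eventually_atTop.mp hev2
  set C : ℝ := 1 + ∑ m ∈ Finset.range N, ‖A ^ m‖ / (r:ℝ) ^ m with hCdef
  have hentry : ∀ (M : Matrix (Fin k) (Fin k) ℂ) (i j : Fin k), ‖M i j‖ ≤ ‖M‖ := by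
    intro M i j
    have : ‖M i j‖₊ ≤ ‖M‖₊ := by
      rw [Matrix.linfty_opNNNorm_def]
      exact le_trans (Finset.single_le_sum (f := fun j => ‖M i j‖₊)
        (fun _ _ => zero_le) (Finset.mem_univ j)) (Finset.le_sup (f := fun i => ∑ j, ‖M i j‖₊) (Finset.mem_univ i))
    exact_mod_cast this
  refine ⟨r, hr0.le, by exact_mod_cast hr2, C, fun n i j => ?_⟩
  refine (hentry _ i j).trans ?_
  rcases le_or_gt N n with h | h
  · have h1 : ‖A ^ n‖ ≤ (r:ℝ) ^ n := by exact_mod_cast hN n h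
    have h2 : (1:ℝ) * (r:ℝ) ^ n ≤ C * (r:ℝ) ^ n := by
      apply mul_le_mul_of_nonneg_right _ (by positivity)
      rw [hCdef]
      have : (0:ℝ) ≤ ∑ m ∈ Finset.range N, ‖A ^ m‖ / (r:ℝ) ^ m :=
        Finset.sum_nonneg fun m _ => by positivity
      linarith
    calc ‖A ^ n‖ ≤ (r:ℝ) ^ n := h1
    _ = 1 * (r:ℝ) ^ n := (one_mul _).symm
    _ ≤ C * (r:ℝ) ^ n := h2
  · have hterm : ‖A ^ n‖ / (r:ℝ) ^ n ≤ C := by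
      rw [hCdef]
      have h1 : ‖A ^ n‖ / (r:ℝ) ^ n ≤ ∑ m ∈ Finset.range N, ‖A ^ m‖ / (r:ℝ) ^ m :=
        Finset.single_le_sum (f := fun m => ‖A ^ m‖ / (r:ℝ) ^ m)
          (fun m _ => by positivity) (Finset.mem_range.mpr h)
      linarith
    have := mul_le_mul_of_nonneg_right hterm (by positivity : (0:ℝ) ≤ (r:ℝ) ^ n)
    rwa [div_mul_cancel₀ _ (by positivity : ((r:ℝ) ^ n) ≠ 0)] at this

end aux

lemma real_entry_bound {k : ℕ} (G : Matrix (Fin k) (Fin k) ℝ)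
    (hspec : spectralRadius ℂ (G.map (algebraMap ℝ ℂ)) < 1) :
    ∃ r : ℝ, 0 ≤ r ∧ r < 1 ∧ ∃ C : ℝ, ∀ n (i j : Fin k), |(G ^ n) i j| ≤ C * r ^ n := by
  obtain ⟨r, hr0, hr1, C, hC⟩ := entry_bound _ hspec
  refine ⟨r, hr0, hr1, C, fun n i j => ?_⟩
  have hpow : (G.map (algebraMap ℝ ℂ)) ^ n = (G ^ n).map (algebraMap ℝ ℂ) := by
    rw [← RingHom.mapMatrix_apply, ← RingHom.mapMatrix_apply, map_pow]
  have := hC n i j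
  rw [hpow] at this
  simpa [Matrix.map_apply, Complex.norm_real] using this

/-- If `G` has nonnegative entries and spectral radius `< 1` (so that
the Neumann series `Σ Gᵗ` converges to `(I_k − G)⁻¹`), `e⁰ ≥ 0`, `b^s ≥ 0` entrywise,
and `e^s ≤ G·e^{s−1} + b^{s−1}` entrywise for `1 ≤ s ≤ S−1`, then
`Σ_{s<S} e^s ≤ (I_k − G)⁻¹·(e⁰ + Σ_{s<S} b^s)` entrywise. -/
theorem sum_of_linear_recursion {k : ℕ} (G : Matrix (Fin k) (Fin k) ℝ)
    (hG : ∀ i j, 0 ≤ G i j)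
    (hspec : spectralRadius ℂ (G.map (algebraMap ℝ ℂ)) < 1)
    (S : ℕ) (hS : 1 ≤ S) (e b : ℕ → Fin k → ℝ)
    (he0 : ∀ i, 0 ≤ e 0 i) (hb : ∀ s i, 0 ≤ b s i)
    (hrec : ∀ s, 1 ≤ s → s ≤ S - 1 → ∀ i, e s i ≤ (G.mulVec (e (s - 1))) i + b (s - 1) i) :
    HasSum (fun t : ℕ => G ^ t) (1 - G)⁻¹ ∧
    ∀ i, ∑ s ∈ Finset.range S, e s i ≤
      ((1 - G)⁻¹.mulVec (e 0 + ∑ s ∈ Finset.range S, b s)) i := by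
  obtain ⟨r, hr0, hr1, C, hC⟩ := real_entry_bound G hspec
  -- entrywise summability
  have hsummable : ∀ i j, Summable fun n => (G ^ n) i j := fun i j =>
    Summable.of_abs (Summable.of_nonneg_of_le (fun n => abs_nonneg _) (fun n => hC n i j)
      ((summable_geometric_of_lt_one hr0 hr1).mul_left C))
  set M : Matrix (Fin k) (Fin k) ℝ := Matrix.of fun i j => ∑' n, (G ^ n) i j with hMdef
  have hent : ∀ i j, HasSum (fun n => (G ^ n) i j) (M i j) := fun i j => (hsummable i j).hasSum
  have hM : HasSum (fun t : ℕ => G ^ t) M := by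
    exact Pi.hasSum.mpr fun i => Pi.hasSum.mpr fun j => hent i j
  -- G ^ n → 0
  have hpow0 : Tendsto (fun n => G ^ n) atTop (nhds 0) := by
    refine tendsto_pi_nhds.mpr fun i => ?_
    refine tendsto_pi_nhds.mpr fun j => ?_
    have : Tendsto (fun n => C * r ^ n) atTop (nhds 0) := by
      simpa using (tendsto_pow_atTop_nhds_zero_of_lt_one hr0 hr1).const_mul C
    exact squeeze_zero_norm (fun n => hC n i j) this
  -- (1 - G) * M = 1
  have hkey : ∀ n, (1 - G) * ∑ t ∈ Finset.range n, G ^ t = 1 - G ^ n := by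
    intro n
    induction n with
    | zero => simp
    | succ n ih =>
      have hc : G * G ^ n = G ^ n * G := ((Commute.refl G).pow_right n).eq
      rw [Finset.sum_range_succ, mul_add, ih, sub_mul, one_mul, pow_succ, ← hc]
      abel
  have hmul1 : (1 - G) * M = 1 := by
    have h1 : Tendsto (fun n => (1 - G) * ∑ t ∈ Finset.range n, G ^ t) atTop
        (nhds ((1 - G) * M)) := hM.tendsto_sum_nat.const_mul _
    have h2 : Tendsto (fun n => (1 : Matrix (Fin k) (Fin k) ℝ) - G ^ n) atTop
        (nhds (1 - 0)) := tendsto_const_nhds.sub hpow0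
    rw [sub_zero] at h2
    exact tendsto_nhds_unique (by simpa only [hkey] using h1) h2
  have hinv : (1 - G)⁻¹ = M := Matrix.inv_eq_right_inv hmul1
  rw [hinv]
  refine ⟨hM, ?_⟩
  -- nonnegativity of powers
  have hGpow : ∀ n (i j : Fin k), 0 ≤ (G ^ n) i j := by
    intro n
    induction n with
    | zero => intro i j; by_cases h : i = j <;> simp [Matrix.one_apply, h]
    | succ n ih =>
      intro i j
      rw [pow_succ, Matrix.mul_apply]
      exact Finset.sum_nonneg fun l _ => mul_nonneg (ih i l) (hG l j)
  -- partial sums of mulVec bounded by M.mulVec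
  have hvecsum : ∀ (v : Fin k → ℝ) (i : Fin k),
      HasSum (fun n => ((G ^ n).mulVec v) i) ((M.mulVec v) i) := by
    intro v i
    have : HasSum (fun n => ∑ j, (G ^ n) i j * v j) (∑ j, M i j * v j) :=
      hasSum_sum fun j _ => (hent i j).mul_right (v j)
    simpa [Matrix.mulVec, dotProduct] using this
  have hpartial : ∀ (v : Fin k → ℝ), (∀ j, 0 ≤ v j) → ∀ (N : ℕ) (i : Fin k),
      ∑ n ∈ Finset.range N, ((G ^ n).mulVec v) i ≤ (M.mulVec v) i := by
    intro v hv N i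
    refine sum_le_hasSum _ (fun n _ => ?_) (hvecsum v i)
    simp only [Matrix.mulVec, dotProduct]
    exact Finset.sum_nonneg fun j _ => mul_nonneg (hGpow n i j) (hv j)
  -- monotonicity of mulVec
  have hmono : ∀ (x y : Fin k → ℝ), (∀ j, x j ≤ y j) → ∀ i,
      (G.mulVec x) i ≤ (G.mulVec y) i := by
    intro x y hxy i
    simp only [Matrix.mulVec, dotProduct]
    exact Finset.sum_le_sum fun j _ => mul_le_mul_of_nonneg_left (hxy j) (hG i j)
  -- the inductive bound
  set P : ℕ → Fin k → ℝ := fun s =>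
    (G ^ s).mulVec (e 0) + ∑ t ∈ Finset.range s, (G ^ (s - 1 - t)).mulVec (b t) with hPdef
  have hPsucc : ∀ s, G.mulVec (P s) + b s = P (s + 1) := by
    intro s
    have h1 : G.mulVec (P s) =
        (G ^ (s + 1)).mulVec (e 0) + ∑ t ∈ Finset.range s, (G ^ (s - t)).mulVec (b t) := by
      rw [hPdef]
      have := map_add G.mulVecLin ((G ^ s).mulVec (e 0))
        (∑ t ∈ Finset.range s, (G ^ (s - 1 - t)).mulVec (b t))
      simp only [Matrix.mulVecLin_apply] at this
      rw [this]
      congr 1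
      · rw [Matrix.mulVec_mulVec, ← pow_succ']
      · rw [← Matrix.mulVecLin_apply, map_sum]
        simp only [Matrix.mulVecLin_apply]
        refine Finset.sum_congr rfl fun t ht => ?_
        rw [Matrix.mulVec_mulVec, ← pow_succ']
        have ht' := Finset.mem_range.mp ht
        have harith : s - 1 - t + 1 = s - t := by omega
        rw [harith]
    rw [h1, hPdef]
    simp only []
    rw [Finset.sum_range_succ]
    have : (G ^ (s + 1 - 1 - s)).mulVec (b s) = b s := by
      simp [Matrix.one_mulVec]
    rw [this, ← add_assoc]
    simp only [Nat.add_sub_cancel]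
  have hclaim : ∀ s, s ≤ S - 1 → ∀ i, e s i ≤ P s i := by
    intro s
    induction s with
    | zero =>
      intro _ i
      simp [hPdef, Matrix.one_mulVec]
    | succ s ih =>
      intro hs i
      have h1 := hrec (s + 1) (by omega) hs i
      simp only [Nat.add_sub_cancel] at h1
      have h2 : (G.mulVec (e s)) i ≤ (G.mulVec (P s)) i :=
        hmono _ _ (ih (by omega)) i
      have h3 : (G.mulVec (P s)) i + b s i = P (s + 1) i := by
        rw [← hPsucc s]; rfl
      linarith
  -- final assembly
  intro i
  have step1 : ∑ s ∈ Finset.range S, e s i ≤ ∑ s ∈ Finset.range S, P s i :=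
    Finset.sum_le_sum fun s hs => hclaim s (by
      have := Finset.mem_range.mp hs; omega) i
  have step2 : ∑ s ∈ Finset.range S, P s i =
      ∑ s ∈ Finset.range S, ((G ^ s).mulVec (e 0)) i +
      ∑ s ∈ Finset.range S, ∑ t ∈ Finset.range s, ((G ^ (s - 1 - t)).mulVec (b t)) i := by
    rw [← Finset.sum_add_distrib]
    refine Finset.sum_congr rfl fun s _ => ?_
    simp [hPdef]
  have step3 : ∑ s ∈ Finset.range S, ((G ^ s).mulVec (e 0)) i ≤ (M.mulVec (e 0)) i :=
    hpartial (e 0) he0 S i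
  -- swap the double sum
  have swap : ∑ s ∈ Finset.range S, ∑ t ∈ Finset.range s, ((G ^ (s - 1 - t)).mulVec (b t)) i =
      ∑ t ∈ Finset.range S, ∑ s ∈ Finset.Ico (t + 1) S, ((G ^ (s - 1 - t)).mulVec (b t)) i := by
    simp only [Finset.range_eq_Ico]
    exact (Finset.sum_Ico_Ico_comm' 0 S fun t s => ((G ^ (s - 1 - t)).mulVec (b t)) i).symm
  have step4 : ∀ t, t < S → ∑ s ∈ Finset.Ico (t + 1) S, ((G ^ (s - 1 - t)).mulVec (b t)) i ≤
      (M.mulVec (b t)) i := by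
    intro t ht
    have hre : ∑ s ∈ Finset.Ico (t + 1) S, ((G ^ (s - 1 - t)).mulVec (b t)) i =
        ∑ m ∈ Finset.range (S - (t + 1)), ((G ^ m).mulVec (b t)) i := by
      rw [Finset.sum_Ico_eq_sum_range]
      refine Finset.sum_congr rfl fun m hm => ?_
      congr 2
      omega
    rw [hre]
    exact hpartial (b t) (hb t) _ i
  have step5 : ∑ t ∈ Finset.range S, (M.mulVec (b t)) i =
      (M.mulVec (∑ s ∈ Finset.range S, b s)) i := by
    rw [← Matrix.mulVecLin_apply, map_sum M.mulVecLin]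
    simp [Matrix.mulVecLin_apply]
  have step6 : (M.mulVec (e 0)) i + (M.mulVec (∑ s ∈ Finset.range S, b s)) i =
      (M.mulVec (e 0 + ∑ s ∈ Finset.range S, b s)) i := by
    rw [Matrix.mulVec_add]; rfl
  calc ∑ s ∈ Finset.range S, e s i ≤ ∑ s ∈ Finset.range S, P s i := step1
    _ = _ + _ := step2
    _ ≤ (M.mulVec (e 0)) i + ∑ t ∈ Finset.range S, (M.mulVec (b t)) i := by
        rw [swap]
        exact add_le_add step3 (Finset.sum_le_sum fun t ht =>
          step4 t (Finset.mem_range.mp ht))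
    _ = (M.mulVec (e 0 + ∑ s ∈ Finset.range S, b s)) i := by rw [step5]; exact step6
end
end

section
/- Let W ∈ ℝ^{n×n} be a mixing matrix with mixing rate α ∈ [0,1), let L > 0, and let f_1, …, f_n : ℝ^d → ℝ be differentiable with L-Lipschitz gradients. Let x, x', s ∈ ℝ^{nd} with blocks x_i, x'_i, s_i and block averages x̄, x̄', s̄, let ∇F(x) ∈ ℝ^{nd} denote the stacked vector whose i-th block is ∇f_i(x_i), and set s' = (W ⊗ I_d)·(s + ∇F(x) − ∇F(x')) with block average s̄'. Then ‖s' − 1_n ⊗ s̄'‖₂² ≤ (2α²/(1+α²))·‖s − 1_n ⊗ s̄‖₂² + (2α²/(1−α²))·(2L²·‖x − 1_n ⊗ x̄‖₂² + 2L²·‖x' − 1_n ⊗ x̄'‖₂² + n·L²·‖x̄ − x̄'‖₂²). -/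
open Finset

noncomputable section

/-- The distributed gradient `∇F(x)`, whose `i`-th block is `∇fᵢ(xᵢ)`. -/
def gradStack {n d : ℕ} (f : Fin n → Vec d → ℝ) (x : Stacked n d) : Stacked n d :=
  WithLp.toLp 2 (fun i => gradient (f i) (x i))

/-! Because `W` is doubly stochastic, the consensus error of `s' = (W ⊗ I)u` equals
`((W - J/n) ⊗ I)` applied to the consensus error of `u = s + (∇F(x) - ∇F(x'))`, so it is at most
`α` times the sum of the consensus errors of `s` and of `∇F(x) - ∇F(x')`. Young's inequality
splits the square of that sum into the two weighted terms. The consensus error of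
`∇F(x) - ∇F(x')` is at most its norm, hence at most `L ‖x - x'‖`, and the Pythagorean splitting
`‖x - x'‖² = ‖(x - 1⊗x̄) - (x' - 1⊗x̄')‖² + n ‖x̄ - x̄'‖²` gives the stated bound. -/

namespace IsMixing

variable {n : ℕ} {W : Matrix (Fin n) (Fin n) ℝ}

lemma sum_row (hW : IsMixing W) (i : Fin n) : ∑ j, W i j = 1 := by
  simpa [Matrix.mulVec, dotProduct] using congrFun hW.1 i

lemma sum_col (hW : IsMixing W) (j : Fin n) : ∑ i, W i j = 1 := by
  simpa [Matrix.vecMul, dotProduct] using congrFun hW.2 j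

end IsMixing

namespace Stacked

variable {n d : ℕ}

def center (x : Stacked n d) : Stacked n d := x - stack n (blockAvg x)

lemma blockAvg_add (x y : Stacked n d) : blockAvg (x + y) = blockAvg x + blockAvg y := by
  simp only [blockAvg, PiLp.add_apply, sum_add_distrib, smul_add]

lemma blockAvg_sub (x y : Stacked n d) : blockAvg (x - y) = blockAvg x - blockAvg y := by
  simp only [blockAvg, PiLp.sub_apply, sum_sub_distrib, smul_sub]

lemma stack_add (y z : Vec d) : stack n (y + z) = stack n y + stack n z := rfl

lemma stack_sub (y z : Vec d) : stack n (y - z) = stack n y - stack n z := rfl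

lemma center_add (x y : Stacked n d) : center (x + y) = center x + center y := by
  simp only [center, blockAvg_add, stack_add]; abel

lemma center_sub (x y : Stacked n d) : center (x - y) = center x - center y := by
  simp only [center, blockAvg_sub, stack_sub]; abel

lemma norm_stack_sq (y : Vec d) : ‖stack n y‖ ^ 2 = n * ‖y‖ ^ 2 := by
  simp [PiLp.norm_sq_eq_of_L2, stack]

lemma sum_sub_blockAvg (x : Stacked n d) : ∑ i, (x i - blockAvg x) = 0 := by
  rcases eq_or_ne n 0 with rfl | hn
  · simp
  · rw [sum_sub_distrib, sum_const, card_univ, Fintype.card_fin, ← Nat.cast_smul_eq_nsmul ℝ,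
      blockAvg, smul_smul, mul_inv_cancel₀ (Nat.cast_ne_zero.mpr hn), one_smul, sub_self]

lemma inner_center_stack (x : Stacked n d) (y : Vec d) :
    inner ℝ (center x) (stack n y) = 0 := by
  rw [PiLp.inner_apply]
  change ∑ i, inner ℝ (x i - blockAvg x) y = 0
  rw [← sum_inner, sum_sub_blockAvg, inner_zero_left]

lemma norm_sq_eq_norm_center_sq_add (x : Stacked n d) :
    ‖x‖ ^ 2 = ‖center x‖ ^ 2 + n * ‖blockAvg x‖ ^ 2 := by
  conv_lhs => rw [← sub_add_cancel x (stack n (blockAvg x))]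
  rw [norm_add_sq_real, ← center, inner_center_stack, norm_stack_sq]
  ring

lemma norm_center_le (x : Stacked n d) : ‖center x‖ ≤ ‖x‖ := by
  refine pow_le_pow_iff_left₀ (norm_nonneg _) (norm_nonneg _) two_ne_zero |>.mp ?_
  rw [norm_sq_eq_norm_center_sq_add x]
  exact le_add_of_nonneg_right (by positivity)

def column (x : Stacked n d) (k : Fin d) : EuclideanSpace ℝ (Fin n) :=
  WithLp.toLp 2 fun j => x j k

lemma norm_sq_eq_sum_norm_column_sq (x : Stacked n d) :
    ‖x‖ ^ 2 = ∑ k, ‖column x k‖ ^ 2 := by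
  simp only [PiLp.norm_sq_eq_of_L2, column, Real.norm_eq_abs, sq_abs]
  exact sum_comm

lemma column_kronApply (M : Matrix (Fin n) (Fin n) ℝ) (x : Stacked n d) (k : Fin d) :
    column (kronApply M x) k = Matrix.toEuclideanLin M (column x k) := by
  ext i
  simp [column, kronApply, Matrix.mulVec, dotProduct]

lemma norm_kronApply_le (M : Matrix (Fin n) (Fin n) ℝ) (x : Stacked n d) :
    ‖kronApply M x‖ ≤
      ‖LinearMap.toContinuousLinearMap (Matrix.toEuclideanLin M)‖ * ‖x‖ := by
  set T := LinearMap.toContinuousLinearMap (Matrix.toEuclideanLin M)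
  refine pow_le_pow_iff_left₀ (norm_nonneg _) (by positivity) two_ne_zero |>.mp ?_
  rw [mul_pow, norm_sq_eq_sum_norm_column_sq, norm_sq_eq_sum_norm_column_sq, mul_sum]
  refine sum_le_sum fun k _ => ?_
  rw [column_kronApply, ← mul_pow]
  exact pow_le_pow_left₀ (norm_nonneg _) (T.le_opNorm (column x k)) 2

lemma blockAvg_kronApply {W : Matrix (Fin n) (Fin n) ℝ} (hW : ∀ j, ∑ i, W i j = 1)
    (x : Stacked n d) : blockAvg (kronApply W x) = blockAvg x := by
  change (n : ℝ)⁻¹ • ∑ i, ∑ j, W i j • x j = (n : ℝ)⁻¹ • ∑ j, x j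
  simp only [sum_comm (γ := Fin n), ← sum_smul, hW, one_smul]

lemma center_kronApply {W : Matrix (Fin n) (Fin n) ℝ} (hW : IsMixing W) (x : Stacked n d) :
    center (kronApply W x) =
      kronApply (W - (n : ℝ)⁻¹ • Matrix.of fun _ _ => (1 : ℝ)) (center x) := by
  ext i : 1
  rcases eq_or_ne n 0 with rfl | hn
  · exact i.elim0
  change ∑ j, W i j • x j - blockAvg (kronApply W x) =
    ∑ j, (W i j - (n : ℝ)⁻¹ * 1) • (x j - blockAvg x)
  have hconst : ∑ _j : Fin n, (n : ℝ)⁻¹ • blockAvg x = blockAvg x := by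
    rw [sum_const, card_univ, Fintype.card_fin, ← Nat.cast_smul_eq_nsmul ℝ, smul_smul,
      mul_inv_cancel₀ (Nat.cast_ne_zero.mpr hn), one_smul]
  simp only [blockAvg_kronApply (IsMixing.sum_col hW), mul_one, sub_smul, smul_sub,
    sum_sub_distrib, ← sum_smul, IsMixing.sum_row hW, one_smul, hconst, ← smul_sum]
  change _ = _ - blockAvg x - (blockAvg x - _)
  abel

lemma norm_center_kronApply_le {W : Matrix (Fin n) (Fin n) ℝ} (hW : IsMixing W)
    (x : Stacked n d) : ‖center (kronApply W x)‖ ≤ mixingRate W * ‖center x‖ := by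
  rw [center_kronApply hW]
  exact norm_kronApply_le _ _

lemma norm_gradStack_sub_sq_le {f : Fin n → Vec d → ℝ} {L : ℝ}
    (hlip : ∀ i, ∀ x y : Vec d, ‖gradient (f i) x - gradient (f i) y‖ ≤ L * ‖x - y‖)
    (x x' : Stacked n d) :
    ‖gradStack f x - gradStack f x'‖ ^ 2 ≤ L ^ 2 * ‖x - x'‖ ^ 2 := by
  rw [PiLp.norm_sq_eq_of_L2, PiLp.norm_sq_eq_of_L2, mul_sum]
  refine sum_le_sum fun i _ => ?_
  rw [← mul_pow]
  exact pow_le_pow_left₀ (norm_nonneg _) (hlip i (x i) (x' i)) 2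

end Stacked

-- Young's inequality `(a + b)² ≤ (1 + ε) a² + (1 + 1/ε) b²` with `ε = (1 - t) / (1 + t)`.
lemma mul_add_sq_le_of_lt_one {t : ℝ} (ht0 : 0 ≤ t) (ht1 : t < 1) (a b : ℝ) :
    t * (a + b) ^ 2 ≤ 2 * t / (1 + t) * a ^ 2 + 2 * t / (1 - t) * b ^ 2 := by
  have hpos : 0 < 1 + t := by linarith
  have hneg : 0 < 1 - t := by linarith
  rw [div_mul_eq_mul_div, div_mul_eq_mul_div, div_add_div _ _ hpos.ne' hneg.ne',
    le_div_iff₀ (mul_pos hpos hneg)]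
  nlinarith [mul_nonneg ht0 (sq_nonneg ((1 - t) * a - (1 + t) * b))]

lemma norm_sub_sq_le_two_mul {E : Type*} [SeminormedAddCommGroup E] (a b : E) :
    ‖a - b‖ ^ 2 ≤ 2 * ‖a‖ ^ 2 + 2 * ‖b‖ ^ 2 := by
  nlinarith [pow_le_pow_left₀ (norm_nonneg _) (norm_sub_le a b) 2,
    add_sq_le (a := ‖a‖) (b := ‖b‖)]

open Stacked in
theorem tracking_consensus_error_step_general {n d : ℕ} (W : Matrix (Fin n) (Fin n) ℝ) (α : ℝ)
    (hW : IsMixing W) (hα : α = mixingRate W) (hα1 : α ∈ Set.Ico (0 : ℝ) 1)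
    (L : ℝ)
    (f : Fin n → Vec d → ℝ)
    (hlip : ∀ i, ∀ x y : Vec d, ‖gradient (f i) x - gradient (f i) y‖ ≤ L * ‖x - y‖)
    (x x' s : Stacked n d) (s' : Stacked n d)
    (hs' : s' = kronApply W (s + gradStack f x - gradStack f x')) :
    ‖s' - stack n (blockAvg s')‖ ^ 2 ≤
      (2 * α ^ 2 / (1 + α ^ 2)) * ‖s - stack n (blockAvg s)‖ ^ 2
      + (2 * α ^ 2 / (1 - α ^ 2)) *
          (2 * L ^ 2 * ‖x - stack n (blockAvg x)‖ ^ 2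
           + 2 * L ^ 2 * ‖x' - stack n (blockAvg x')‖ ^ 2
           + n * L ^ 2 * ‖blockAvg x - blockAvg x'‖ ^ 2) := by
  obtain ⟨hα0, hα1⟩ := hα1
  have hα2 : α ^ 2 < 1 := by nlinarith
  set g := gradStack f x - gradStack f x'
  have hcontract : ‖center s'‖ ≤ α * (‖center s‖ + ‖center g‖) := by
    rw [hs', add_sub_assoc, hα]
    refine (norm_center_kronApply_le hW _).trans ?_
    rw [center_add]
    gcongr
    exacts [hα ▸ hα0, norm_add_le _ _]
  have hgrad : ‖center g‖ ^ 2 ≤ L ^ 2 * (2 * ‖center x‖ ^ 2 + 2 * ‖center x'‖ ^ 2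
      + n * ‖blockAvg x - blockAvg x'‖ ^ 2) :=
    calc ‖center g‖ ^ 2 ≤ ‖g‖ ^ 2 := pow_le_pow_left₀ (norm_nonneg _) (norm_center_le g) 2
      _ ≤ L ^ 2 * ‖x - x'‖ ^ 2 := norm_gradStack_sub_sq_le hlip x x'
      _ = L ^ 2 * (‖center x - center x'‖ ^ 2 + n * ‖blockAvg x - blockAvg x'‖ ^ 2) := by
        rw [norm_sq_eq_norm_center_sq_add, center_sub, blockAvg_sub]
      _ ≤ _ := by gcongr; exact norm_sub_sq_le_two_mul _ _
  calc ‖center s'‖ ^ 2 ≤ α ^ 2 * (‖center s‖ + ‖center g‖) ^ 2 := by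
        rw [← mul_pow]; exact pow_le_pow_left₀ (norm_nonneg _) hcontract 2
    _ ≤ 2 * α ^ 2 / (1 + α ^ 2) * ‖center s‖ ^ 2 + 2 * α ^ 2 / (1 - α ^ 2) * ‖center g‖ ^ 2 :=
        mul_add_sq_le_of_lt_one (sq_nonneg α) hα2 _ _
    _ ≤ 2 * α ^ 2 / (1 + α ^ 2) * ‖center s‖ ^ 2 + 2 * α ^ 2 / (1 - α ^ 2) * (L ^ 2 *
          (2 * ‖center x‖ ^ 2 + 2 * ‖center x'‖ ^ 2 + n * ‖blockAvg x - blockAvg x'‖ ^ 2)) := by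
        have : 0 < 1 - α ^ 2 := by linarith
        gcongr
    _ = _ := by simp only [center]; ring

/-- Gradient-tracking consensus error: with
`s' = (W ⊗ I_d)(s + ∇F(x) − ∇F(x'))`,
`‖s' − 1ₙ⊗s̄'‖² ≤ (2α²/(1+α²))‖s − 1ₙ⊗s̄‖²
  + (2α²/(1−α²))(2L²‖x − 1ₙ⊗x̄‖² + 2L²‖x' − 1ₙ⊗x̄'‖² + nL²‖x̄ − x̄'‖²)`. -/
theorem tracking_consensus_error_step {n d : ℕ} (W : Matrix (Fin n) (Fin n) ℝ) (α : ℝ)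
    (hW : IsMixing W) (hα : α = mixingRate W) (hα1 : α ∈ Set.Ico (0 : ℝ) 1)
    (L : ℝ) (hL : 0 < L)
    (f : Fin n → Vec d → ℝ) (hdiff : ∀ i, Differentiable ℝ (f i))
    (hlip : ∀ i, ∀ x y : Vec d, ‖gradient (f i) x - gradient (f i) y‖ ≤ L * ‖x - y‖)
    (x x' s : Stacked n d) (s' : Stacked n d)
    (hs' : s' = kronApply W (s + gradStack f x - gradStack f x')) :
    ‖s' - stack n (blockAvg s')‖ ^ 2 ≤
      (2 * α ^ 2 / (1 + α ^ 2)) * ‖s - stack n (blockAvg s)‖ ^ 2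
      + (2 * α ^ 2 / (1 - α ^ 2)) *
          (2 * L ^ 2 * ‖x - stack n (blockAvg x)‖ ^ 2
           + 2 * L ^ 2 * ‖x' - stack n (blockAvg x')‖ ^ 2
           + n * L ^ 2 * ‖blockAvg x - blockAvg x'‖ ^ 2) :=
  tracking_consensus_error_step_general W α hW hα hα1 L f hlip x x' s s' hs'

end
end
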